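/- arXiv:1801.07378 — 5 statements merged into one kernel-verified Lean document; each statement's English description precedes it below -/
import Mathlib

section
/- Let X be a Hausdorff locally convex space and f : X → ℝ ∪ {+∞} a proper lower semicontinuous convex function, and let x* ∈ X*. Then the sublevel sets {x ∈ X : f(x) − ⟨x*, x⟩ ≤ γ} are weakly compact in X for every γ ∈ ℝ if and only if the conjugate function f* is finite at x* and continuous at x* with respect to the Mackey topology τ(X*, X) on X*. -/
open Topology Set Pointwise Bornology

set_option linter.unusedSectionVars false
set_option maxHeartbeats 1000000

noncomputable section

section Defs

variable {X : Type*} [AddCommGroup X] [Module ℝ X] [TopologicalSpace X]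

/-- Fenchel conjugate of an extended-real-valued function `f : X → ℝ ∪ {+∞}`. -/
def conjugate (f : X → EReal) (φ : X →L[ℝ] ℝ) : EReal := ⨆ x : X, (φ x : EReal) - f x

/-- Moreau–Rockafellar subdifferential of `f : X → ℝ ∪ {+∞}` at `x`. -/
def subdiff (f : X → EReal) (x : X) : Set (X →L[ℝ] ℝ) :=
  {φ | ∀ y : X, ((φ (y - x) : ℝ) : EReal) + f x ≤ f y}

/-- A set `A ⊆ X` is weakly compact (compact for the weak topology `σ(X, X*)`). -/
def WeaklyCompact (A : Set X) : Prop := IsCompact (toWeakSpace ℝ X '' A)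

/-- A set `A ⊆ X` is relatively weakly compact. -/
def RelWeaklyCompact (A : Set X) : Prop := IsCompact (closure (toWeakSpace ℝ X '' A))

/-- The directional asymptotic cone of a set of continuous linear functionals. -/
def asympCone (A : Set (X →L[ℝ] ℝ)) : Set (X →L[ℝ] ℝ) :=
  {y | ∃ x ∈ A, ∀ l : ℝ, 0 ≤ l → x + l • y ∈ A}

/-- The class `ℰ(K)` of functions `φ : X → ℝ ∪ {+∞}` from Definition 3.1. -/
def EClass (K : Set (X →L[ℝ] ℝ)) : Set (X → EReal) :=
  {φ | (∀ ψ : X →L[ℝ] ℝ, conjugate φ ψ ≠ ⊥) ∧ conjugate φ 0 = 0 ∧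
    asympCone K ⊆ {ψ | conjugate φ ψ ≠ ⊤} ∧ {ψ | conjugate φ ψ ≠ ⊤} ⊆ K ∧
    (∀ ψ ∈ K \ asympCone K,
      sSup {v : EReal | ∃ η : ℝ, 0 < η ∧ conjugate φ (η • ψ) ≠ ⊤ ∧ v = conjugate φ (η • ψ)} = ⊤) ∧
    (∀ ψ : X →L[ℝ] ℝ, conjugate φ ψ ≠ ⊤ → ∃ x : X, ψ ∈ subdiff φ x)}

/-- Polar of a subset of `X`. -/
def pol (K : Set X) : Set (X →L[ℝ] ℝ) := {φ | ∀ x ∈ K, φ x ≤ 1}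

/-- Support function of a subset of `X`. -/
def supportFn (A : Set X) (φ : X →L[ℝ] ℝ) : EReal := sSup ((fun x => ((φ x : ℝ) : EReal)) '' A)

/-- A set is open for the Mackey topology `τ(X*,X)`: around each of its points it contains a
translate of the polar of some weakly compact balanced (circled) convex subset of `X`. -/
def MackeyOpen (U : Set (X →L[ℝ] ℝ)) : Prop :=
  ∀ φ ∈ U, ∃ K : Set X, WeaklyCompact K ∧ Balanced ℝ K ∧ Convex ℝ K ∧
    {ψ : X →L[ℝ] ℝ | ∀ x ∈ K, (ψ - φ) x ≤ 1} ⊆ U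

/-- `F : X* → ℝ ∪ {±∞}` is continuous at `φ` for the Mackey topology `τ(X*,X)`. -/
def MackeyContinuousAt (F : (X →L[ℝ] ℝ) → EReal) (φ : X →L[ℝ] ℝ) : Prop :=
  ∀ V ∈ 𝓝 (F φ), ∃ K : Set X, WeaklyCompact K ∧ Balanced ℝ K ∧ Convex ℝ K ∧
    ∀ ψ : X →L[ℝ] ℝ, (∀ x ∈ K, (ψ - φ) x ≤ 1) → F ψ ∈ V

/-- `f` is epi-pointed: `f*` is proper and `τ(X*,X)`-continuous at some point of its domain. -/
def EpiPointed (f : X → EReal) : Prop :=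
  (∃ ψ : X →L[ℝ] ℝ, conjugate f ψ ≠ ⊤) ∧ (∀ ψ : X →L[ℝ] ℝ, conjugate f ψ ≠ ⊥) ∧
  ∃ φ : X →L[ℝ] ℝ, conjugate f φ ≠ ⊤ ∧ MackeyContinuousAt (conjugate f) φ

/-- Relative compactness in `X × ℝ` for the product of the weak topology `σ(X, X*)` on `X`
with the usual topology on `ℝ`. -/
def RelWeaklyCompactProd (A : Set (X × ℝ)) : Prop :=
  IsCompact (closure ((fun p : X × ℝ => ((toWeakSpace ℝ X p.1 : WeakSpace ℝ X), p.2)) '' A))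

/-- Epigraph of `f : X → ℝ ∪ {+∞}` (as a subset of `X × ℝ`). -/
def Epigr (f : X → EReal) : Set (X × ℝ) := {p | f p.1 ≤ (p.2 : EReal)}

/-- Inf-convolution of two extended-real-valued functions. -/
def infConv (f g : X → EReal) (x : X) : EReal := ⨅ z : X, f z + g (x - z)

/-- Convexity for extended-real-valued functions. -/
def EConvex (f : X → EReal) : Prop :=
  ∀ x y : X, ∀ a b : ℝ, 0 ≤ a → 0 ≤ b → a + b = 1 →
    f (a • x + b • y) ≤ (a : EReal) * f x + (b : EReal) * f y

/-- The algebraic interior of a set of continuous linear functionals. -/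
def algInt (A : Set (X →L[ℝ] ℝ)) : Set (X →L[ℝ] ℝ) :=
  {a ∈ A | ∀ ψ : X →L[ℝ] ℝ, ∃ δ > (0:ℝ), ∀ l ∈ Set.Icc (0:ℝ) δ, a + l • ψ ∈ A}

/-- Subdifferential of a real-valued function on `X*`, with respect to the pairing with `X`. -/
def subdiffStar (g : (X →L[ℝ] ℝ) → ℝ) (φ : X →L[ℝ] ℝ) : Set X :=
  {x | ∀ ψ : X →L[ℝ] ℝ, (ψ - φ) x + g φ ≤ g ψ}

end Defs

section Defs2

variable {X : Type*} [AddCommGroup X] [Module ℝ X] [TopologicalSpace X]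

/-- Support function (on `X`) of a set of continuous linear functionals. -/
def supportFnStar (A : Set (X →L[ℝ] ℝ)) (x : X) : EReal :=
  sSup ((fun ψ : X →L[ℝ] ℝ => ((ψ x : ℝ) : EReal)) '' A)

/-- Subdifferential of an extended-real-valued function on `X*`, w.r.t. the pairing with `X`. -/
def subdiffStarE (F : (X →L[ℝ] ℝ) → EReal) (φ : X →L[ℝ] ℝ) : Set X :=
  {x | ∀ ψ : X →L[ℝ] ℝ, (((ψ - φ) x : ℝ) : EReal) + F φ ≤ F ψ}

end Defs2

variable {X : Type*} [AddCommGroup X] [Module ℝ X] [TopologicalSpace X]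
  [IsTopologicalAddGroup X] [ContinuousSMul ℝ X] [LocallyConvexSpace ℝ X] [T2Space X]

lemma ereal_cases (x : EReal) : x = ⊥ ∨ x = ⊤ ∨ ∃ a : ℝ, x = a := by
  induction x using EReal.rec with
  | bot => exact Or.inl rfl
  | coe a => exact Or.inr (Or.inr ⟨a, rfl⟩)
  | top => exact Or.inr (Or.inl rfl)

lemma eval_wk (θ : X →L[ℝ] ℝ) :
    Continuous fun p : WeakSpace ℝ X => θ ((toWeakSpace ℝ X).symm p) :=
  WeakBilin.eval_continuous (topDualPairing ℝ X).flip θ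

lemma t2_weak : T2Space (WeakSpace ℝ X) := by
  refine ⟨fun x y hxy => ?_⟩
  have hxy' : (toWeakSpace ℝ X).symm x ≠ (toWeakSpace ℝ X).symm y := by
    intro h; exact hxy ((toWeakSpace ℝ X).symm.injective h)
  obtain ⟨θ, hθ⟩ := geometric_hahn_banach_point_point hxy'
  exact separated_by_continuous (eval_wk θ) hθ.ne

lemma isClosed_weak_image {C : Set X} (hC : Convex ℝ C) (h : IsClosed C) :
    IsClosed (toWeakSpace ℝ X '' C) := by
  rw [← h.closure_eq, hC.toWeakSpace_closure ℝ]
  exact isClosed_closure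

lemma isClosed_of_weak {C : Set X} (h : IsClosed (toWeakSpace ℝ X '' C)) : IsClosed C := by
  have hC : C = toWeakSpaceCLM ℝ X ⁻¹' (toWeakSpace ℝ X '' C) := by
    ext z
    simp only [mem_preimage, toWeakSpaceCLM_eq_toWeakSpace]
    exact ⟨fun hz => ⟨z, hz, rfl⟩, fun ⟨w, hw, hwz⟩ => (toWeakSpace ℝ X).injective hwz ▸ hw⟩
  rw [hC]
  exact h.preimage (map_continuous _)

lemma weak_image_smul (s : ℝ) (A : Set X) :
    toWeakSpace ℝ X '' (s • A) = s • (toWeakSpace ℝ X '' A) := by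
  simp only [← Set.image_smul, Set.image_image, map_smul]

lemma balanced_of_convex_symm {A : Set X} (hA : Convex ℝ A) (hsym : ∀ x ∈ A, -x ∈ A)
    (h0 : (0 : X) ∈ A) : Balanced ℝ A := by
  intro a ha x hx
  obtain ⟨z, hz, rfl⟩ := hx
  rcases le_or_gt 0 a with h | h
  · have h1 : a ≤ 1 := by simpa [abs_of_nonneg h] using ha
    have := hA hz h0 h (by linarith : (0:ℝ) ≤ 1 - a) (by ring)
    simpa using this
  · have h1 : -a ≤ 1 := by
      have : |a| ≤ 1 := by simpa using ha
      rw [abs_of_neg h] at this; exact this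
    have := hA (hsym z hz) h0 (by linarith : (0:ℝ) ≤ -a) (by linarith : (0:ℝ) ≤ 1 - (-a)) (by ring)
    simpa [smul_smul, neg_smul, smul_neg] using this


section Alg
variable {E : Type*} [AddCommGroup E] [Module ℝ E]

lemma convexJoin_eq_image (A B : Set E) :
    convexJoin ℝ A B = (fun p : ℝ × E × E => (1 - p.1) • p.2.1 + p.1 • p.2.2) ''
      (Set.Icc (0:ℝ) 1 ×ˢ A ×ˢ B) := by
  ext z
  simp only [mem_convexJoin, mem_image, mem_prod, Prod.exists, segment_eq_image, mem_Icc]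
  constructor
  · rintro ⟨a, ha, b, hb, hz⟩
    obtain ⟨t, ht, hzt⟩ := hz
    exact ⟨t, a, b, ⟨ht, ha, hb⟩, hzt⟩
  · rintro ⟨t, a, b, ⟨ht, ha, hb⟩, hz⟩
    exact ⟨a, ha, b, hb, t, ht, hz⟩

end Alg


instance weakSpace_continuousSMul : ContinuousSMul ℝ (WeakSpace ℝ X) :=
  WeakBilin.instContinuousSMul (topDualPairing ℝ X).flip

lemma isCompact_convexJoin {A B : Set (WeakSpace ℝ X)} (hA : IsCompact A) (hB : IsCompact B) :
    IsCompact (convexJoin ℝ A B) := by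
  rw [convexJoin_eq_image]
  refine IsCompact.image (isCompact_Icc.prod (hA.prod hB)) ?_
  exact ((continuous_const.sub continuous_fst).smul (continuous_fst.comp continuous_snd)).add
    (continuous_fst.smul (continuous_snd.comp continuous_snd))

lemma weak_image_convexJoin (A B : Set X) :
    toWeakSpace ℝ X '' (convexJoin ℝ A B) =
      convexJoin ℝ (toWeakSpace ℝ X '' A) (toWeakSpace ℝ X '' B) := by
  rw [convexJoin_eq_image, convexJoin_eq_image, Set.image_image]
  ext z
  simp only [mem_image, mem_prod, Prod.exists, mem_Icc]
  constructor
  · rintro ⟨t, a, b, ⟨ht, ha, hb⟩, rfl⟩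
    exact ⟨t, toWeakSpace ℝ X a, toWeakSpace ℝ X b, ⟨ht, ⟨a, ha, rfl⟩, ⟨b, hb, rfl⟩⟩,
      by simp [map_add, map_smul]⟩
  · rintro ⟨t, a, b, ⟨ht, ⟨a', ha', rfl⟩, ⟨b', hb', rfl⟩⟩, rfl⟩
    exact ⟨t, a', b', ⟨ht, ha', hb'⟩, by simp [map_add, map_smul]⟩

lemma sublevel_convex {f : X → EReal} (hnb : ∀ x, f x ≠ ⊥) (hconv : EConvex f)
    (φ : X →L[ℝ] ℝ) (γ : ℝ) : Convex ℝ {x : X | f x - φ x ≤ (γ : EReal)} := by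
  intro x hx y hy a b ha hb hab
  simp only [mem_setOf_eq] at hx hy ⊢
  have hfx : ∃ p : ℝ, f x = p := by
    rcases ereal_cases (f x) with h | h | h
    · exact absurd h (hnb x)
    · rw [h] at hx; simp only [EReal.top_sub_coe] at hx
      exact absurd hx (by simp)
    · exact h
  have hfy : ∃ q : ℝ, f y = q := by
    rcases ereal_cases (f y) with h | h | h
    · exact absurd h (hnb y)
    · rw [h] at hy; simp only [EReal.top_sub_coe] at hy
      exact absurd hy (by simp)
    · exact h
  obtain ⟨p, hp⟩ := hfx
  obtain ⟨q, hq⟩ := hfy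
  have hx' : p - φ x ≤ γ := by
    rw [hp, ← EReal.coe_sub] at hx; exact_mod_cast hx
  have hy' : q - φ y ≤ γ := by
    rw [hq, ← EReal.coe_sub] at hy; exact_mod_cast hy
  have hcc := hconv x y a b ha hb hab
  rw [hp, hq, ← EReal.coe_mul, ← EReal.coe_mul, ← EReal.coe_add] at hcc
  have hφ : φ (a • x + b • y) = a * φ x + b * φ y := by
    simp [map_add, map_smul, smul_eq_mul]
  refine le_trans (by exact add_le_add_left hcc _ : f (a • x + b • y) - ↑(φ (a • x + b • y)) ≤
    ((a * p + b * q : ℝ) : EReal) - ↑(φ (a • x + b • y))) ?_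
  rw [← EReal.coe_sub, EReal.coe_le_coe_iff, hφ]
  have hγ : a * γ + b * γ = γ := by rw [← add_mul, hab, one_mul]
  nlinarith [mul_le_mul_of_nonneg_left hx' ha, mul_le_mul_of_nonneg_left hy' hb]

lemma sublevel_closed {f : X → EReal} (hlsc : LowerSemicontinuous f)
    (φ : X →L[ℝ] ℝ) (γ : ℝ) : IsClosed {x : X | f x - φ x ≤ (γ : EReal)} := by
  rw [← isOpen_compl_iff]
  rw [isOpen_iff_mem_nhds]
  intro x₀ hx₀
  simp only [mem_compl_iff, mem_setOf_eq, not_le] at hx₀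
  have hq : ∃ q : ℝ, (q : EReal) < f x₀ ∧ γ + φ x₀ < q := by
    rcases ereal_cases (f x₀) with h | h | h
    · rw [h, EReal.bot_sub] at hx₀
      exact absurd hx₀ (by simp)
    · exact ⟨γ + φ x₀ + 1, by rw [h]; exact EReal.coe_lt_top _, by linarith⟩
    · obtain ⟨p, hp⟩ := h
      rw [hp, ← EReal.coe_sub] at hx₀
      have : γ < p - φ x₀ := by exact_mod_cast hx₀
      exact ⟨(p + γ + φ x₀) / 2, by rw [hp]; exact_mod_cast (by linarith : (p + γ + φ x₀)/2 < p),
        by linarith⟩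
  obtain ⟨q, hq1, hq2⟩ := hq
  have h1 : ∀ᶠ x in 𝓝 x₀, (q : EReal) < f x := hlsc x₀ _ hq1
  have h2 : ∀ᶠ x in 𝓝 x₀, φ x < q - γ :=
    (isOpen_lt (map_continuous φ) continuous_const).mem_nhds (by simp only [mem_setOf_eq]; linarith)
  filter_upwards [h1, h2] with x hfx hφx
  simp only [mem_compl_iff, mem_setOf_eq, not_le]
  rcases ereal_cases (f x) with h | h | h
  · rw [h] at hfx; exact absurd hfx (by simp)
  · rw [h]; simp [EReal.top_sub_coe]
  · obtain ⟨m, hm⟩ := h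
    rw [hm] at hfx ⊢
    rw [← EReal.coe_sub]
    have : q < m := by exact_mod_cast hfx
    exact_mod_cast (by linarith : γ < m - φ x)


lemma sublevel_real {f : X → EReal} (hnb : ∀ x, f x ≠ ⊥) {φ : X →L[ℝ] ℝ} {γ : ℝ} {x : X}
    (hx : f x - φ x ≤ (γ : EReal)) : ∃ a : ℝ, f x = a ∧ a - φ x ≤ γ := by
  rcases ereal_cases (f x) with h | h | h
  · exact absurd h (hnb x)
  · rw [h, EReal.top_sub_coe] at hx; exact absurd hx (by simp)
  · obtain ⟨a, ha⟩ := h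
    rw [ha, ← EReal.coe_sub] at hx
    exact ⟨a, ha, by exact_mod_cast hx⟩

lemma dir_mpr (f : X → EReal) (hnb : ∀ x, f x ≠ ⊥) (hlsc : LowerSemicontinuous f)
    (hconv : EConvex f) (φ : X →L[ℝ] ℝ)
    (h1 : conjugate f φ ≠ ⊤) (h2 : conjugate f φ ≠ ⊥)
    (hm : MackeyContinuousAt (conjugate f) φ) (γ : ℝ) :
    WeaklyCompact {x : X | f x - φ x ≤ (γ : EReal)} := by
  obtain ⟨r, hr⟩ : ∃ r : ℝ, conjugate f φ = r := by
    rcases ereal_cases (conjugate f φ) with h | h | h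
    · exact absurd h h2
    · exact absurd h h1
    · exact h
  have hV : Iio (((r + 1 : ℝ)) : EReal) ∈ 𝓝 (conjugate f φ) := by
    rw [hr]; exact isOpen_Iio.mem_nhds (by simpa using EReal.coe_lt_coe_iff.2 (lt_add_one r))
  obtain ⟨K, hKwc, hKbal, hKconv, hK⟩ := hm _ hV
  set C := {x : X | f x - φ x ≤ (γ : EReal)} with hCdef
  have hCconv := sublevel_convex hnb hconv φ γ
  have hCcl := sublevel_closed hlsc φ γ
  have key : ∀ ψ : X →L[ℝ] ℝ, (∀ z ∈ K, (ψ - φ) z ≤ 1) → ∀ x ∈ C, ∀ a : ℝ, f x = a →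
      ψ x - a < r + 1 := by
    intro ψ hψ x _ a hfa
    have hmem := hK ψ hψ
    have hle : (ψ x : EReal) - f x ≤ conjugate f ψ := le_iSup (fun x => (ψ x : EReal) - f x) x
    rw [hfa, ← EReal.coe_sub] at hle
    have : ((ψ x - a : ℝ) : EReal) < ((r + 1 : ℝ) : EReal) := lt_of_le_of_lt hle hmem
    exact_mod_cast this
  rcases eq_empty_or_nonempty K with hKe | hKne
  · have hsub : C ⊆ {0} := by
      intro x hx
      obtain ⟨a, hfa, haγ⟩ := sublevel_real hnb hx
      by_contra hx0
      obtain ⟨θ, hθ⟩ := geometric_hahn_banach_point_point (Ne.symm hx0 : (0 : X) ≠ x)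
      have hθx : 0 < θ x := by simpa using hθ
      set t := (|r + 1 + γ| + 1) / θ x with ht
      have ht0 : t * θ x = |r + 1 + γ| + 1 := by
        rw [ht, div_mul_cancel₀ _ hθx.ne']
      have hkey := key (φ + t • θ) (by simp [hKe]) x hx a hfa
      simp only [ContinuousLinearMap.add_apply, ContinuousLinearMap.coe_smul',
        Pi.smul_apply, smul_eq_mul] at hkey
      have := le_abs_self (r + 1 + γ)
      linarith
    refine Set.Finite.isCompact ?_
    exact (Set.finite_singleton (toWeakSpace ℝ X 0)).subset
      (by rw [← Set.image_singleton]; exact Set.image_mono hsub)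
  · have h0K : (0 : X) ∈ K := by
      obtain ⟨z, hz⟩ := hKne
      have h0 : (0 : X) ∈ (0 : ℝ) • K := ⟨z, hz, by simp⟩
      exact hKbal 0 (by simp) h0
    set M := |r| + |γ| + 2 with hM
    have hM0 : (0 : ℝ) < M := by positivity
    set D := M • K with hDdef
    have hDwc : IsCompact (toWeakSpace ℝ X '' D) := by
      rw [hDdef, weak_image_smul]
      exact IsCompact.smul M hKwc
    haveI := t2_weak (X := X)
    have hDcl : IsClosed D := isClosed_of_weak hDwc.isClosed
    have hDconv : Convex ℝ D := hKconv.smul M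
    have hsub : C ⊆ D := by
      intro x hx
      by_contra hxD
      obtain ⟨θ, u, hθD, hθx⟩ := geometric_hahn_banach_closed_point hDconv hDcl hxD
      have hu : 0 < u := by
        have h0D : (0 : X) ∈ D := ⟨0, h0K, smul_zero M⟩
        have := hθD 0 h0D
        simpa using this
      set ψ := φ + (M / u) • θ with hψdef
      have hψ : ∀ z ∈ K, (ψ - φ) z ≤ 1 := by
        intro z hz
        have hMz : θ (M • z) < u := hθD _ ⟨z, hz, rfl⟩
        rw [map_smul, smul_eq_mul] at hMz
        have heval : (ψ - φ) z = (M / u) * θ z := by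
          simp [hψdef, ContinuousLinearMap.sub_apply, ContinuousLinearMap.add_apply]
        rw [heval, div_mul_eq_mul_div]
        exact (div_le_one hu).2 hMz.le
      obtain ⟨a, hfa, haγ⟩ := sublevel_real hnb hx
      have hkey := key ψ hψ x hx a hfa
      have hψx : ψ x = φ x + (M / u) * θ x := by
        simp [hψdef, ContinuousLinearMap.add_apply]
      rw [hψx] at hkey
      have h3 : (M / u) * θ x < M := by
        have hr' := le_abs_self r
        have hγ' := le_abs_self γ
        linarith
      have h4 : θ x < u := by
        by_contra hcon
        push_neg at hcon
        have h5 : (M / u) * u ≤ (M / u) * θ x :=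
          mul_le_mul_of_nonneg_left hcon (div_pos hM0 hu).le
        rw [div_mul_cancel₀ M hu.ne'] at h5
        linarith
      linarith
    exact IsCompact.of_isClosed_subset hDwc (isClosed_weak_image hCconv hCcl)
      (Set.image_mono hsub)

lemma weak_image_neg (A : Set X) :
    toWeakSpace ℝ X '' (-A) = -(toWeakSpace ℝ X '' A) := by
  simp only [← Set.image_neg_eq_neg, Set.image_image]
  simp [map_neg]

lemma conj_lb (f : X → EReal) {ψ : X →L[ℝ] ℝ} (x : X) {a : ℝ} (hfa : f x = a) :
    ((ψ x - a : ℝ) : EReal) ≤ conjugate f ψ := by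
  have := le_iSup (fun x => (ψ x : EReal) - f x) x
  rwa [hfa, ← EReal.coe_sub] at this

lemma lt_conj_real {f : X → EReal} (hnb : ∀ x, f x ≠ ⊥) {ψ : X →L[ℝ] ℝ} {b : ℝ}
    (h : (b : EReal) < conjugate f ψ) : ∃ x : X, ∃ a : ℝ, f x = a ∧ b < ψ x - a := by
  rw [conjugate, lt_iSup_iff] at h
  obtain ⟨x, hx⟩ := h
  rcases ereal_cases (f x) with hc | hc | hc
  · exact absurd hc (hnb x)
  · rw [hc, EReal.sub_top] at hx; exact absurd hx (by simp)
  · obtain ⟨a, ha⟩ := hc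
    rw [ha, ← EReal.coe_sub] at hx
    exact ⟨x, a, ha, by exact_mod_cast hx⟩

lemma dir_mp (f : X → EReal) (hne : ∃ x, f x ≠ ⊤) (hnb : ∀ x, f x ≠ ⊥)
    (hconv : EConvex f) (φ : X →L[ℝ] ℝ)
    (hw : ∀ γ : ℝ, WeaklyCompact {x : X | f x - φ x ≤ (γ : EReal)}) :
    conjugate f φ ≠ ⊤ ∧ conjugate f φ ≠ ⊥ ∧ MackeyContinuousAt (conjugate f) φ := by
  haveI := t2_weak (X := X)
  -- not ⊥
  have h2 : conjugate f φ ≠ ⊥ := by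
    obtain ⟨x₀, hx₀⟩ := hne
    obtain ⟨a₀, ha₀⟩ : ∃ a : ℝ, f x₀ = a := by
      rcases ereal_cases (f x₀) with h | h | h
      · exact absurd h (hnb x₀)
      · exact absurd h hx₀
      · exact h
    intro h
    have := conj_lb f x₀ ha₀ (ψ := φ)
    rw [h, le_bot_iff] at this
    exact EReal.coe_ne_bot _ this
  -- not ⊤
  have h1 : conjugate f φ ≠ ⊤ := by
    intro htop
    set S : ℕ → Set (WeakSpace ℝ X) :=
      fun n => toWeakSpace ℝ X '' {x : X | f x - φ x ≤ ((-(n : ℝ) : ℝ) : EReal)} with hS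
    have hmono : ∀ m n : ℕ, m ≤ n → S n ⊆ S m := by
      intro m n hmn
      apply Set.image_mono
      intro x hx
      simp only [Set.mem_setOf_eq] at hx ⊢
      exact le_trans hx (EReal.coe_le_coe_iff.2 (neg_le_neg (Nat.cast_le.2 hmn)))
    have hdir : Directed (· ⊇ ·) S := fun m n =>
      ⟨max m n, hmono m _ (le_max_left m n), hmono n _ (le_max_right m n)⟩
    have hnonempty : ∀ n : ℕ, (S n).Nonempty := by
      intro n
      have hlt : (((n : ℝ) : ℝ) : EReal) < conjugate f φ := by
        rw [htop]; exact EReal.coe_lt_top _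
      obtain ⟨x, a, hfa, hxa⟩ := lt_conj_real hnb hlt
      refine ⟨toWeakSpace ℝ X x, x, ?_, rfl⟩
      simp only [Set.mem_setOf_eq, hfa, ← EReal.coe_sub]
      exact_mod_cast (by linarith : a - φ x ≤ -(n : ℝ))
    have hcpt : ∀ n : ℕ, IsCompact (S n) := fun n => hw _
    have hcl : ∀ n : ℕ, IsClosed (S n) := fun n => (hcpt n).isClosed
    obtain ⟨p, hp⟩ := IsCompact.nonempty_iInter_of_directed_nonempty_isCompact_isClosed
      S hdir hnonempty hcpt hcl
    set x := (toWeakSpace ℝ X).symm p with hx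
    have hxall : ∀ n : ℕ, f x - φ x ≤ ((-(n : ℝ) : ℝ) : EReal) := by
      intro n
      have := Set.mem_iInter.1 hp n
      obtain ⟨z, hz, hzp⟩ := this
      have : z = x := by rw [hx, ← hzp, LinearEquiv.symm_apply_apply]
      rwa [this] at hz
    obtain ⟨a, hfa, ha0⟩ := sublevel_real hnb (γ := 0) (by simpa using hxall 0)
    obtain ⟨n, hn⟩ := exists_nat_gt (φ x - a)
    have := hxall n
    rw [hfa, ← EReal.coe_sub] at this
    have : a - φ x ≤ -(n : ℝ) := by exact_mod_cast this
    linarith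
  refine ⟨h1, h2, ?_⟩
  -- Mackey continuity
  obtain ⟨r, hr⟩ : ∃ r : ℝ, conjugate f φ = r := by
    rcases ereal_cases (conjugate f φ) with h | h | h
    · exact absurd h h2
    · exact absurd h h1
    · exact h
  intro V hV
  rw [hr] at hV
  rw [mem_nhds_iff_exists_Ioo_subset' ⟨⊥, EReal.bot_lt_coe r⟩ ⟨⊤, EReal.coe_lt_top r⟩] at hV
  obtain ⟨l', u', ⟨hl'r, hru'⟩, hIV⟩ := hV
  obtain ⟨lr, hl'lr, hlrr⟩ := EReal.exists_between_coe_real hl'r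
  obtain ⟨ur, hrur, hur'⟩ := EReal.exists_between_coe_real hru'
  have hlrr' : lr < r := by exact_mod_cast hlrr
  have hrur' : r < ur := by exact_mod_cast hrur
  set ε := min (r - lr) (ur - r) with hε
  have hε0 : 0 < ε := by
    apply lt_min <;> linarith
  have hεl : ε ≤ r - lr := by rw [hε]; exact min_le_left _ _
  have hεu : ε ≤ ur - r := by rw [hε]; exact min_le_right _ _
  set γ' := ε + 2 - r with hγ'
  set L := {x : X | f x - φ x ≤ (γ' : EReal)} with hL
  have hLwc : IsCompact (toWeakSpace ℝ X '' L) := hw γ'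
  have hLconv : Convex ℝ L := sublevel_convex hnb hconv φ γ'
  -- a point deep in L
  obtain ⟨x₀, a₀, ha₀, hx₀⟩ : ∃ x₀ : X, ∃ a₀ : ℝ, f x₀ = a₀ ∧ r - 1 < φ x₀ - a₀ := by
    obtain ⟨x₀, a₀, ha₀, h⟩ := lt_conj_real hnb (ψ := φ) (b := r - 1)
      (by rw [hr]; exact_mod_cast (by linarith : r - 1 < r))
    exact ⟨x₀, a₀, ha₀, by linarith⟩
  have hx₀L : x₀ ∈ L := by
    rw [hL, Set.mem_setOf_eq, ha₀, ← EReal.coe_sub]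
    exact_mod_cast (by linarith [hε0.le] : a₀ - φ x₀ ≤ γ')
  -- the set J = convexJoin L (-L)
  set J := convexJoin ℝ L (-L) with hJ
  have hJconv : Convex ℝ J := hLconv.convexJoin hLconv.neg
  have hJL : ∀ x ∈ L, x ∈ J := by
    intro x hx
    rw [hJ, mem_convexJoin]
    exact ⟨x, hx, -x₀, Set.neg_mem_neg.2 hx₀L, left_mem_segment ℝ x (-x₀)⟩
  have hJnegL : ∀ x ∈ L, -x ∈ J := by
    intro x hx
    rw [hJ, mem_convexJoin]
    exact ⟨x₀, hx₀L, -x, Set.neg_mem_neg.2 hx,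
      by rw [segment_symm]; exact left_mem_segment ℝ (-x) x₀⟩
  have hJsym : ∀ z ∈ J, -z ∈ J := by
    intro z hz
    rw [hJ, mem_convexJoin] at hz
    obtain ⟨a, ha, b, hb, hseg⟩ := hz
    obtain ⟨u, v, hu, hv, huv, rfl⟩ := hseg
    rw [hJ, mem_convexJoin]
    refine ⟨-b, ?_, -a, Set.neg_mem_neg.2 ha, ?_⟩
    · rwa [← Set.neg_mem_neg, neg_neg] at hb
    · exact ⟨v, u, hv, hu, by linarith, by rw [neg_add, ← smul_neg, ← smul_neg]; exact add_comm _ _⟩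
  have hJ0 : (0 : X) ∈ J := by
    rw [hJ, mem_convexJoin]
    refine ⟨x₀, hx₀L, -x₀, Set.neg_mem_neg.2 hx₀L, ?_⟩
    exact ⟨1/2, 1/2, by norm_num, by norm_num, by norm_num, by rw [smul_neg, add_neg_cancel]⟩
  have hJwc : IsCompact (toWeakSpace ℝ X '' J) := by
    rw [hJ, weak_image_convexJoin, weak_image_neg]
    refine isCompact_convexJoin hLwc ?_
    rw [← Set.image_neg_eq_neg]
    exact hLwc.image continuous_neg
  -- the final K
  set s := 2 / ε with hs
  have hs0 : 0 < s := by positivity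
  refine ⟨s • J, ?_, ?_, hJconv.smul s, ?_⟩
  · show IsCompact _
    rw [weak_image_smul]
    exact IsCompact.smul s hJwc
  · intro a ha z hz
    obtain ⟨w, hw, rfl⟩ := hz
    obtain ⟨j, hj, rfl⟩ := hw
    show a • s • j ∈ s • J
    rw [smul_comm]
    refine Set.smul_mem_smul_set ?_
    rcases le_or_gt 0 a with h | h
    · have h1 : a ≤ 1 := by simpa [abs_of_nonneg h] using ha
      have := hJconv hj hJ0 h (by linarith : (0:ℝ) ≤ 1 - a) (by ring)
      simpa using this
    · have h1 : -a ≤ 1 := by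
        have : |a| ≤ 1 := by simpa using ha
        rw [abs_of_neg h] at this; exact this
      have := hJconv (hJsym j hj) hJ0 (by linarith : (0:ℝ) ≤ -a)
        (by linarith : (0:ℝ) ≤ 1 - (-a)) (by ring)
      simpa [smul_smul, neg_smul, smul_neg] using this
  · -- the continuity estimate
    intro ψ hψ
    have hθL : ∀ x ∈ L, |ψ x - φ x| ≤ ε / 2 := by
      intro x hx
      have hp : (ψ - φ) (s • x) ≤ 1 := hψ _ (Set.smul_mem_smul_set (hJL x hx))
      have hm : (ψ - φ) (s • (-x)) ≤ 1 := hψ _ (Set.smul_mem_smul_set (hJnegL x hx))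
      rw [map_smul, smul_eq_mul, ContinuousLinearMap.sub_apply] at hp
      rw [map_smul, smul_eq_mul, ContinuousLinearMap.sub_apply, map_neg, map_neg] at hm
      have key2 : ∀ d : ℝ, s * d ≤ 1 → d ≤ ε / 2 := by
        intro d hd
        rw [hs, div_mul_eq_mul_div, div_le_one hε0] at hd
        linarith
      have hm' : s * (φ x - ψ x) ≤ 1 := by
        rw [show φ x - ψ x = -ψ x - -φ x by ring]; exact hm
      rw [abs_le]
      exact ⟨by have := key2 _ hm'; linarith, key2 _ hp⟩
    -- upper bound
    have hub : ∀ x : X, (ψ x : EReal) - f x ≤ ((r + ε / 2 : ℝ) : EReal) := by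
      intro x
      rcases ereal_cases (f x) with h | h | h
      · exact absurd h (hnb x)
      · rw [h, EReal.sub_top]; exact bot_le
      · obtain ⟨a, ha⟩ := h
        rw [ha, ← EReal.coe_sub, EReal.coe_le_coe_iff]
        have hfle : φ x - a ≤ r := by
          have := conj_lb f x ha (ψ := φ)
          rw [hr] at this
          exact_mod_cast this
        rcases le_or_gt (a - φ x) γ' with hin | hout
        · have hmem : x ∈ L := by
            rw [hL, Set.mem_setOf_eq, ha, ← EReal.coe_sub]
            exact_mod_cast hin
          have := hθL x hmem
          rw [abs_le] at this
          linarith [this.2]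
        · -- outside L : use convexity
          set t := (ε + 1) / (a - φ x + r) with htdef
          have hden : ε + 2 < a - φ x + r := by rw [hγ'] at hout; linarith
          have hden0 : 0 < a - φ x + r := by linarith
          have ht0 : 0 < t := by positivity
          have ht1 : t < 1 := by
            rw [htdef, div_lt_one hden0]; linarith
          have htmul : t * (a - φ x + r) = ε + 1 := by
            rw [htdef]; field_simp
          set y := (1 - t) • x₀ + t • x with hy
          have hfy := hconv x₀ x (1 - t) t (by linarith) (by linarith) (by ring)
          rw [ha₀, ha, ← EReal.coe_mul, ← EReal.coe_mul, ← EReal.coe_add] at hfy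
          have hφy : φ y = (1 - t) * φ x₀ + t * φ x := by
            rw [hy]; simp [map_add, map_smul, smul_eq_mul]
          have hyL : y ∈ L := by
            rw [hL, Set.mem_setOf_eq]
            refine le_trans (add_le_add_left hfy _) ?_
            rw [hφy, ← EReal.coe_neg, ← EReal.coe_add, EReal.coe_le_coe_iff]
            nlinarith
          have hθy := hθL y hyL
          have hθx₀ := hθL x₀ hx₀L
          rw [abs_le] at hθy hθx₀
          have hθylin : ψ y - φ y = (1 - t) * (ψ x₀ - φ x₀) + t * (ψ x - φ x) := by
            rw [hy]; simp [map_add, map_smul, smul_eq_mul]; ring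
          have htx : t * (ψ x - φ x) ≤ ε := by nlinarith [hθy.2, hθx₀.1]
          -- ψ x - a = (ψ x - φ x) - (a - φ x + r) + r
          nlinarith [htx, htmul, hden]
    have hconjub : conjugate f ψ ≤ ((r + ε / 2 : ℝ) : EReal) := iSup_le hub
    -- lower bound
    obtain ⟨xb, ab, hab, hxb⟩ := lt_conj_real hnb (ψ := φ) (b := r - ε / 2)
      (by rw [hr]; exact_mod_cast (by linarith : r - ε / 2 < r))
    have hxbL : xb ∈ L := by
      rw [hL, Set.mem_setOf_eq, hab, ← EReal.coe_sub]
      exact_mod_cast (by linarith : ab - φ xb ≤ γ')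
    have hθxb := hθL xb hxbL
    rw [abs_le] at hθxb
    have hlb : ((r - ε : ℝ) : EReal) < conjugate f ψ := by
      refine lt_of_lt_of_le ?_ (conj_lb f xb hab (ψ := ψ))
      exact_mod_cast (by linarith [hθxb.1] : r - ε < ψ xb - ab)
    refine hIV ⟨?_, ?_⟩
    · refine lt_of_lt_of_le hl'lr (le_trans ?_ hlb.le)
      exact_mod_cast (by linarith : lr ≤ r - ε)
    · refine lt_of_le_of_lt hconjub (lt_trans ?_ hur')
      exact_mod_cast (by linarith : r + ε / 2 < ur)

/-- Moreau's theorem: the sublevel sets of `f - x*` are all weakly compact iff the conjugate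
`f*` is finite at `x*` and Mackey-continuous at `x*`. -/
theorem sublevels_weaklyCompact_iff_conjugate_finite_and_mackeyContinuous
    (f : X → EReal) (hne : ∃ x, f x ≠ ⊤) (hnb : ∀ x, f x ≠ ⊥)
    (hlsc : LowerSemicontinuous f) (hconv : EConvex f) (φ : X →L[ℝ] ℝ) :
    (∀ γ : ℝ, WeaklyCompact {x : X | f x - φ x ≤ (γ : EReal)}) ↔
      (conjugate f φ ≠ ⊤ ∧ conjugate f φ ≠ ⊥ ∧ MackeyContinuousAt (conjugate f) φ) := by
  constructor
  · intro hw
    exact dir_mp f hne hnb hconv φ hw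
  · rintro ⟨h1, h2, hm⟩ γ
    exact dir_mpr f hnb hlsc hconv φ h1 h2 hm γ

end
end

section
/- Let Y be a locally convex space, g : Y → ℝ a lower semicontinuous convex function, and Ψ : ℝ → ℝ ∪ {+∞} a non-decreasing convex function that is continuously differentiable on (the interior of) its domain. Then for every x ∈ Y with g(x) in the interior of dom Ψ and Ψ'(g(x)) > 0, one has ∂(Ψ ∘ g)(x) = Ψ'(g(x)) · ∂g(x). -/
/-!
Write `t₀ = g x` and `c = Ψ'(t₀) > 0`. Since `Ψ` is convex and differentiable at `t₀`, its tangent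
line lies below it, `Ψ t₀ + c (t - t₀) ≤ Ψ t`; composing with `g` shows `c • ∂g(x) ⊆ ∂(Ψ ∘ g)(x)`.
Conversely, for `φ ∈ ∂(Ψ ∘ g)(x)` test the subgradient inequality at `x + a • (y - x)`: convexity
of `g` and monotonicity of `Ψ` give `a φ(y - x) ≤ Ψ(t₀ + a (g y - t₀)) - Ψ t₀` for small `a > 0`,
and dividing by `a` and letting `a → 0⁺` yields `φ(y - x) ≤ c (g y - g x)`, i.e.
`c⁻¹ • φ ∈ ∂g(x)`.
-/

open Topology Set Pointwise Bornology

noncomputable section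

open Filter

lemma EConvex.convexOn_of_eq_coe {E : Type*} [AddCommGroup E] [Module ℝ E] [TopologicalSpace E]
    {f : E → EReal} (hf : EConvex f) {F : E → ℝ} (hF : ∀ x, f x ≠ ⊤ → f x = F x) :
    ConvexOn ℝ {x | f x ≠ ⊤} F := by
  have key : ∀ ⦃x⦄, f x ≠ ⊤ → ∀ ⦃y⦄, f y ≠ ⊤ → ∀ ⦃a b : ℝ⦄, 0 ≤ a → 0 ≤ b → a + b = 1 →
      f (a • x + b • y) ≤ ((a * F x + b * F y : ℝ) : EReal) := by
    intro x hx y hy a b ha hb hab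
    simpa [hF x hx, hF y hy] using hf x y a b ha hb hab
  refine ⟨fun x hx y hy a b ha hb hab => ?_, fun x hx y hy a b ha hb hab => ?_⟩
  · exact ne_top_of_le_ne_top (EReal.coe_ne_top _) (key hx hy ha hb hab)
  · have hxy := key hx hy ha hb hab
    rw [hF _ (ne_top_of_le_ne_top (EReal.coe_ne_top _) hxy)] at hxy
    simpa using EReal.coe_le_coe_iff.mp hxy

lemma ConvexOn.mul_sub_le_sub_of_hasDerivAt {S : Set ℝ} {f : ℝ → ℝ} {x y f' : ℝ}
    (hf : ConvexOn ℝ S f) (hx : x ∈ S) (hy : y ∈ S) (hf' : HasDerivAt f f' x) :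
    f' * (y - x) ≤ f y - f x := by
  rcases lt_trichotomy x y with hxy | rfl | hyx
  · have := hf.le_slope_of_hasDerivAt hx hy hxy hf'
    rw [slope_def_field, le_div_iff₀ (sub_pos.mpr hxy)] at this
    exact this
  · simp
  · have := hf.slope_le_of_hasDerivAt hy hx hyx hf'
    rw [slope_def_field, div_le_iff₀ (sub_pos.mpr hyx)] at this
    linarith

lemma EConvex.coe_mul_sub_add_le {Ψ : ℝ → EReal} (hΨ : EConvex Ψ) {ψ : ℝ → ℝ}
    (hψ : ∀ t, Ψ t ≠ ⊤ → Ψ t = ψ t) {t₀ c : ℝ} (ht₀ : Ψ t₀ ≠ ⊤) (hc : HasDerivAt ψ c t₀)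
    (t : ℝ) : ((c * (t - t₀) : ℝ) : EReal) + Ψ t₀ ≤ Ψ t := by
  rcases eq_or_ne (Ψ t) ⊤ with ht | ht
  · simp [ht]
  · have := (hΨ.convexOn_of_eq_coe hψ).mul_sub_le_sub_of_hasDerivAt ht₀ ht hc
    rw [hψ t ht, hψ t₀ ht₀, ← EReal.coe_add, EReal.coe_le_coe_iff]
    linarith

lemma HasDerivAt.le_mul_of_eventually_mul_le {f : ℝ → ℝ} {f' t d m : ℝ}
    (hf : HasDerivAt f f' t) (h : ∀ᶠ a in 𝓝[>] 0, a * m ≤ f (t + a * d) - f t) :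
    m ≤ f' * d := by
  have hline : HasDerivAt (fun a : ℝ => t + a * d) d 0 := by
    simpa using ((hasDerivAt_id (0 : ℝ)).mul_const d).const_add t
  have hcomp : HasDerivAt (fun a => f (t + a * d)) (f' * d) 0 :=
    (by simpa using hf : HasDerivAt f f' (t + 0 * d)).comp 0 hline
  refine ge_of_tendsto hcomp.tendsto_slope_zero_right ?_
  filter_upwards [h, self_mem_nhdsWithin] with a ha (hpos : 0 < a)
  simpa [le_inv_mul_iff₀ hpos] using ha

section Subdiff

variable {Y : Type*} [AddCommGroup Y] [Module ℝ Y] [TopologicalSpace Y]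

lemma mem_subdiff_coe_iff {g : Y → ℝ} {x : Y} {φ : Y →L[ℝ] ℝ} :
    φ ∈ subdiff (fun y => ((g y : ℝ) : EReal)) x ↔ ∀ y, φ (y - x) + g x ≤ g y := by
  simp only [subdiff, Set.mem_ofPred_eq, ← EReal.coe_add, EReal.coe_le_coe_iff]

lemma smul_mem_subdiff_comp {g : Y → ℝ} {Ψ : ℝ → EReal} {x : Y} {c : ℝ} (hc : 0 ≤ c)
    (htangent : ∀ t, ((c * (t - g x) : ℝ) : EReal) + Ψ (g x) ≤ Ψ t) {η : Y →L[ℝ] ℝ}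
    (hη : η ∈ subdiff (fun y => ((g y : ℝ) : EReal)) x) :
    c • η ∈ subdiff (fun y => Ψ (g y)) x := by
  intro y
  have hηy := mem_subdiff_coe_iff.mp hη y
  have hle : c * η (y - x) ≤ c * (g y - g x) :=
    mul_le_mul_of_nonneg_left (by linarith) hc
  calc (((c • η) (y - x) : ℝ) : EReal) + Ψ (g x)
      ≤ ((c * (g y - g x) : ℝ) : EReal) + Ψ (g x) :=
        add_le_add_left (EReal.coe_le_coe_iff.mpr hle) _
    _ ≤ Ψ (g y) := htangent (g y)

lemma apply_sub_le_mul_of_mem_subdiff_comp {g : Y → ℝ} (hg : ConvexOn ℝ univ g)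
    {Ψ : ℝ → EReal} (hΨ : Monotone Ψ) {ψ : ℝ → ℝ} {x : Y} (hψ : ∀ᶠ t in 𝓝 (g x), Ψ t = ψ t)
    {c : ℝ} (hc : HasDerivAt ψ c (g x)) {φ : Y →L[ℝ] ℝ}
    (hφ : φ ∈ subdiff (fun y => Ψ (g y)) x) (y : Y) :
    φ (y - x) ≤ c * (g y - g x) := by
  set d := g y - g x
  have hline : Tendsto (fun a : ℝ => g x + a * d) (𝓝[>] 0) (𝓝 (g x)) :=
    tendsto_nhdsWithin_of_tendsto_nhds <| by
      simpa using ((continuous_mul_const d).tendsto 0).const_add (g x)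
  refine hc.le_mul_of_eventually_mul_le ?_
  filter_upwards [hline.eventually hψ, Ioc_mem_nhdsGT (zero_lt_one' ℝ)] with a hψa ha
  have hga : g (x + a • (y - x)) ≤ g x + a * d := by
    have hpt : x + a • (y - x) = (1 - a) • x + a • y := by module
    rw [hpt]
    have := hg.2 (mem_univ x) (mem_univ y) (sub_nonneg.mpr ha.2) ha.1.le (sub_add_cancel 1 a)
    refine this.trans_eq ?_
    simp only [smul_eq_mul, d]
    ring
  have hsub := hφ (x + a • (y - x))
  dsimp only at hsub
  rw [add_sub_cancel_left, map_smul, smul_eq_mul, hψ.self_of_nhds] at hsub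
  have : ((a * φ (y - x) + ψ (g x) : ℝ) : EReal) ≤ ψ (g x + a * d) :=
    hsub.trans ((hΨ hga).trans_eq hψa)
  linarith [EReal.coe_le_coe_iff.mp this]

lemma inv_smul_mem_subdiff_coe {g : Y → ℝ} {x : Y} {c : ℝ} (hc : 0 < c) {φ : Y →L[ℝ] ℝ}
    (hφ : ∀ y, φ (y - x) ≤ c * (g y - g x)) :
    c⁻¹ • φ ∈ subdiff (fun y => ((g y : ℝ) : EReal)) x := by
  refine mem_subdiff_coe_iff.mpr fun y => ?_
  have := hφ y
  change c⁻¹ * φ (y - x) + g x ≤ g y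
  rw [← le_sub_iff_add_le, inv_mul_le_iff₀ hc]
  linarith

end Subdiff

theorem subdiff_comp_eq_smul_subdiff_general
    {Y : Type*} [AddCommGroup Y] [Module ℝ Y] [TopologicalSpace Y]
    (g : Y → ℝ) (hconv : ConvexOn ℝ Set.univ g)
    (Ψ : ℝ → EReal) (hmono : Monotone Ψ)
    (hΨconv : ∀ s t : ℝ, ∀ a b : ℝ, 0 ≤ a → 0 ≤ b → a + b = 1 →
      Ψ (a * s + b * t) ≤ (a : EReal) * Ψ s + (b : EReal) * Ψ t)
    (ψ : ℝ → ℝ) (hψ : ∀ t : ℝ, Ψ t ≠ ⊤ → Ψ t = (ψ t : EReal))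
    (Ψ' : ℝ → ℝ)
    (hderiv : ∀ t ∈ interior {t : ℝ | Ψ t ≠ ⊤}, HasDerivAt ψ (Ψ' t) t)
    (x : Y) (hx : g x ∈ interior {t : ℝ | Ψ t ≠ ⊤}) (hpos : 0 < Ψ' (g x)) :
    subdiff (fun y => Ψ (g y)) x = Ψ' (g x) • subdiff (fun y => ((g y : ℝ) : EReal)) x := by
  have hΨ : EConvex Ψ := hΨconv
  have hΨψ : ∀ᶠ t in 𝓝 (g x), Ψ t = ψ t := eventually_of_mem (mem_interior_iff_mem_nhds.mp hx) hψ
  have htangent := hΨ.coe_mul_sub_add_le hψ (interior_subset hx) (hderiv _ hx)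
  ext φ
  constructor
  · intro hφ
    have hbound := apply_sub_le_mul_of_mem_subdiff_comp hconv hmono hΨψ (hderiv _ hx) hφ
    exact ⟨_, inv_smul_mem_subdiff_coe hpos hbound, smul_inv_smul₀ hpos.ne' φ⟩
  · rintro ⟨η, hη, rfl⟩
    exact smul_mem_subdiff_comp hpos.le htangent hη

/-- Chain rule for the subdifferential of the composition `Ψ ∘ g` (Lemma 3.3). -/
theorem subdiff_comp_eq_smul_subdiff
    {Y : Type*} [AddCommGroup Y] [Module ℝ Y] [TopologicalSpace Y]
    [IsTopologicalAddGroup Y] [ContinuousSMul ℝ Y] [LocallyConvexSpace ℝ Y] [T2Space Y]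
    (g : Y → ℝ) (hlsc : LowerSemicontinuous g) (hconv : ConvexOn ℝ Set.univ g)
    (Ψ : ℝ → EReal) (hΨbot : ∀ t : ℝ, Ψ t ≠ ⊥) (hmono : Monotone Ψ)
    (hΨconv : ∀ s t : ℝ, ∀ a b : ℝ, 0 ≤ a → 0 ≤ b → a + b = 1 →
      Ψ (a * s + b * t) ≤ (a : EReal) * Ψ s + (b : EReal) * Ψ t)
    (ψ : ℝ → ℝ) (hψ : ∀ t : ℝ, Ψ t ≠ ⊤ → Ψ t = (ψ t : EReal))
    (Ψ' : ℝ → ℝ)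
    (hderiv : ∀ t ∈ interior {t : ℝ | Ψ t ≠ ⊤}, HasDerivAt ψ (Ψ' t) t)
    (hcont : ContinuousOn Ψ' (interior {t : ℝ | Ψ t ≠ ⊤}))
    (x : Y) (hx : g x ∈ interior {t : ℝ | Ψ t ≠ ⊤}) (hpos : 0 < Ψ' (g x)) :
    subdiff (fun y => Ψ (g y)) x = Ψ' (g x) • subdiff (fun y => ((g y : ℝ) : EReal)) x :=
  subdiff_comp_eq_smul_subdiff_general g hconv Ψ hmono hΨconv ψ hψ Ψ' hderiv x hx hpos

end
end

section
/- Let X be a complete Hausdorff locally convex space and g : X* → ℝ a weak*-lower semicontinuous convex function such that 0 ∈ lev_g^<(β) := {x* ∈ X* : g(x*) < β} and ∂g(x*) ≠ ∅ for every x* ∈ lev_g^<(β), where the subdifferential of g is taken with respect to the pairing of X* with X. Then ℰ(lev_g^<(β)) ≠ ∅. -/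
open Topology Set Pointwise Bornology

noncomputable section

section Aux

lemma aux_h_ineq {β a s t : ℝ} (ha : a < β) (hs : s < β) (ht : t < β) :
    (β - a)/(β - t)^2 * (s - t) + (t - a)/(β - t) ≤ (s - a)/(β - s) := by
  have h1 : 0 < β - s := by linarith
  have h2 : 0 < β - t := by linarith
  have ha' : 0 < β - a := by linarith
  rw [div_mul_eq_mul_div, div_add_div _ _ (by positivity) h2.ne',
    div_le_div_iff₀ (by positivity) h1]
  nlinarith [mul_nonneg (mul_nonneg h2.le ha'.le) (sq_nonneg ((β-s)-(β-t)))]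

lemma aux_ray_lsc {X : Type*} [AddCommGroup X] [Module ℝ X] [TopologicalSpace X]
    (g : (X →L[ℝ] ℝ) → ℝ)
    (hlsc : LowerSemicontinuous (fun φ : WeakDual ℝ X => g φ))
    (hconv : ConvexOn ℝ Set.univ g) (β : ℝ) (h0 : g 0 < β)
    (y x : X →L[ℝ] ℝ) (hray : ∀ l : ℝ, 0 ≤ l → g (x + l • y) < β) :
    g y < β := by
  by_contra hge
  push_neg at hge
  set c := (g 0 + β)/2 with hcdef
  have hc : c < g y := by simp only [hcdef]; linarith
  have hev := hlsc y c hc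
  set f : ℕ → WeakDual ℝ X := fun n => (((n:ℝ)+1)⁻¹ • x + y : X →L[ℝ] ℝ) with hfdef
  have htend : Filter.Tendsto f Filter.atTop (𝓝 (y : WeakDual ℝ X)) := by
    refine (tendsto_iff_forall_eval_tendsto_topDualPairing (x := (y : WeakDual ℝ X))).mpr ?_
    intro v
    simp only [topDualPairing_apply, hfdef]
    have h1 : Filter.Tendsto (fun n : ℕ => ((n:ℝ)+1)⁻¹) Filter.atTop (𝓝 0) := by
      simpa [one_div] using tendsto_one_div_add_atTop_nhds_zero_nat (𝕜 := ℝ)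
    have h2 := (h1.mul_const (x v)).add_const (y v)
    simp only [zero_mul, zero_add] at h2
    convert h2 using 2 with n
    simp
  have hub : ∀ n : ℕ, 2 ≤ n → g (f n) < c := by
    intro n hn
    have hn' : (2:ℝ) ≤ (n:ℝ) := by exact_mod_cast hn
    set a : ℝ := ((n:ℝ)+1)⁻¹ with hadef
    have hn1 : (0:ℝ) < (n:ℝ)+1 := by linarith
    have ha0 : 0 < a := by positivity
    have ha3 : a ≤ 1/3 := by
      rw [hadef, inv_le_comm₀ (by linarith) (by norm_num)]
      norm_num; linarith
    have hcomb : (f n : X →L[ℝ] ℝ) = a • (x + ((n:ℝ)+1) • y) + (1 - a) • (0 : X →L[ℝ] ℝ) := by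
      rw [smul_zero, add_zero, smul_add, smul_smul, inv_mul_cancel₀ hn1.ne', one_smul]
    have hu : g (x + ((n:ℝ)+1) • y) < β := hray ((n:ℝ)+1) (by linarith)
    have hcv := hconv.2 (Set.mem_univ (x + ((n:ℝ)+1) • y)) (Set.mem_univ (0 : X →L[ℝ] ℝ))
      ha0.le (by linarith : (0:ℝ) ≤ 1 - a) (by ring)
    rw [← hcomb] at hcv
    have : g (f n) ≤ a * g (x + ((n:ℝ)+1) • y) + (1 - a) * g 0 := hcv
    nlinarith
  obtain ⟨n, hn1, hn2⟩ := ((htend.eventually hev).and (Filter.eventually_ge_atTop 2)).exists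
  exact absurd hn1 (not_lt.mpr (hub n hn2).le)

end Aux

variable {X : Type*} [AddCommGroup X] [Module ℝ X] [UniformSpace X] [IsUniformAddGroup X]
  [ContinuousSMul ℝ X] [LocallyConvexSpace ℝ X] [T2Space X] [CompleteSpace X]

set_option maxHeartbeats 4000000 in
/-- Lemma 3.4: `ℰ(lev_g^<(β))` is nonempty. -/
theorem eclass_strictSublevel_nonempty
    (g : (X →L[ℝ] ℝ) → ℝ)
    (hlsc : LowerSemicontinuous (fun φ : WeakDual ℝ X => g φ))
    (hconv : ConvexOn ℝ Set.univ g) (β : ℝ)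
    (h0 : g 0 < β)
    (hsub : ∀ φ : X →L[ℝ] ℝ, g φ < β → (subdiffStar g φ).Nonempty) :
    (EClass {φ : X →L[ℝ] ℝ | g φ < β}).Nonempty := by
  classical
  set Fr : (X →L[ℝ] ℝ) → ℝ := fun ψ => (g ψ - g 0) / (β - g ψ) with hFr
  set F : (X →L[ℝ] ℝ) → EReal := fun ψ => if g ψ < β then ((Fr ψ : ℝ) : EReal) else ⊤ with hF
  set φ : X → EReal := fun x => ⨆ ψ : X →L[ℝ] ℝ, ((ψ x : EReal) - F ψ) with hφ
  have hFr0 : Fr 0 = 0 := by simp [hFr]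
  have hF0 : F 0 = (0 : EReal) := by simp [hF, h0, hFr0]
  -- q along rays, convex and continuous
  have hq : ∀ ψ : X →L[ℝ] ℝ, Continuous (fun t : ℝ => g (t • ψ)) := by
    intro ψ
    have h := hconv.comp_affineMap (LinearMap.toSpanSingleton ℝ (X →L[ℝ] ℝ) ψ).toAffineMap
    have h2 : ConvexOn ℝ Set.univ (fun t : ℝ => g (t • ψ)) := by
      exact h
    exact continuousOn_univ.mp (h2.continuousOn isOpen_univ)
  -- subgradient transfer
  have hsubF : ∀ ψ : X →L[ℝ] ℝ, g ψ < β → ∃ x : X, x ∈ subdiffStarE F ψ := by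
    intro ψ hψ
    obtain ⟨x, hx⟩ := hsub ψ hψ
    refine ⟨((β - g 0)/(β - g ψ)^2) • x, fun χ => ?_⟩
    by_cases hχ : g χ < β
    · simp only [hF, if_pos hχ, if_pos hψ, ← EReal.coe_add, EReal.coe_le_coe_iff]
      have hx' := hx χ
      have hmap : (χ - ψ) (((β - g 0)/(β - g ψ)^2) • x)
          = ((β - g 0)/(β - g ψ)^2) * ((χ - ψ) x) := by simp
      have hlam : 0 ≤ (β - g 0)/(β - g ψ)^2 := div_nonneg (by linarith) (sq_nonneg _)
      have key := aux_h_ineq (a := g 0) (s := g χ) (t := g ψ) h0 hχ hψ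
      have hmul := mul_le_mul_of_nonneg_left
        (by linarith [hx'] : (χ - ψ) x ≤ g χ - g ψ) hlam
      rw [hmap]
      simp only [hFr]
      linarith
    · simp [hF, hχ]
  -- attainment
  have hattain : ∀ ψ : X →L[ℝ] ℝ, g ψ < β → ∀ x ∈ subdiffStarE F ψ,
      φ x = ((ψ x - Fr ψ : ℝ) : EReal) := by
    intro ψ hψ x hx
    apply le_antisymm
    · refine iSup_le fun χ => ?_
      by_cases hχ : g χ < β
      · have h1 := hx χ
        simp only [hF, if_pos hχ, if_pos hψ, ← EReal.coe_add, EReal.coe_le_coe_iff] at h1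
        simp only [hF, if_pos hχ, ← EReal.coe_sub, EReal.coe_le_coe_iff]
        have hχψ : (χ - ψ) x = χ x - ψ x := by simp
        rw [hχψ] at h1
        linarith
      · simp [hF, hχ, EReal.sub_top]
    · have heq : ((ψ x - Fr ψ : ℝ) : EReal) = (ψ x : EReal) - F ψ := by
        simp [hF, if_pos hψ, EReal.coe_sub]
      rw [heq]
      exact le_iSup (fun χ : X →L[ℝ] ℝ => (χ x : EReal) - F χ) ψ
  have hφ0 : ∀ x : X, (0 : EReal) ≤ φ x := by
    intro x
    have := le_iSup (fun ψ : X →L[ℝ] ℝ => (ψ x : EReal) - F ψ) 0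
    simpa [hF0] using this
  have hφnb : ∀ x : X, φ x ≠ ⊥ := by
    intro x h
    exact absurd (h ▸ hφ0 x) (by simp)
  have hconjle : ∀ ψ : X →L[ℝ] ℝ, conjugate φ ψ ≤ F ψ := by
    intro ψ
    refine iSup_le fun x => ?_
    by_cases hψ' : g ψ < β
    · by_cases hx : φ x = ⊤
      · simp [hx, EReal.sub_top]
      · have hr : φ x = (((φ x).toReal : ℝ) : EReal) := (EReal.coe_toReal hx (hφnb x)).symm
        have hle : (ψ x : EReal) - F ψ ≤ φ x :=
          le_iSup (fun χ : X →L[ℝ] ℝ => (χ x : EReal) - F χ) ψ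
        rw [hr] at hle ⊢
        simp only [hF, if_pos hψ', ← EReal.coe_sub, EReal.coe_le_coe_iff] at hle ⊢
        linarith
    · simp [hF, hψ']
  have hconjeq : ∀ ψ : X →L[ℝ] ℝ, g ψ < β → conjugate φ ψ = ((Fr ψ : ℝ) : EReal) := by
    intro ψ hψ
    obtain ⟨x, hx⟩ := hsubF ψ hψ
    refine le_antisymm (by simpa [hF, if_pos hψ] using hconjle ψ) ?_
    have hφx := hattain ψ hψ x hx
    have heq : (ψ x : EReal) - φ x = ((Fr ψ : ℝ) : EReal) := by
      rw [hφx, ← EReal.coe_sub]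
      norm_num
    exact heq ▸ le_iSup (fun z : X => (ψ z : EReal) - φ z) x
  have hconjnebot : ∀ ψ : X →L[ℝ] ℝ, conjugate φ ψ ≠ ⊥ := by
    obtain ⟨x0, hx0⟩ := hsubF 0 h0
    have hφx0 : φ x0 = ((0 : ℝ) : EReal) := by simpa [hFr0] using hattain 0 h0 x0 hx0
    intro ψ h
    have hle : (ψ x0 : EReal) - φ x0 ≤ conjugate φ ψ :=
      le_iSup (fun z : X => (ψ z : EReal) - φ z) x0
    rw [hφx0, ← EReal.coe_sub, h, le_bot_iff] at hle
    exact EReal.coe_ne_bot _ hle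
  have hdom : ∀ ψ : X →L[ℝ] ℝ, conjugate φ ψ ≠ ⊤ → g ψ < β := by
    intro ψ hne
    by_contra hψβ
    push_neg at hψβ
    set c := (conjugate φ ψ).toReal with hcdef
    have hc : conjugate φ ψ = ((c : ℝ) : EReal) := (EReal.coe_toReal hne (hconjnebot ψ)).symm
    have hscale : ∀ t : ℝ, 0 < t → t < 1 → conjugate φ (t • ψ) ≤ ((t * c : ℝ) : EReal) := by
      intro t ht0 ht1
      refine iSup_le fun x => ?_
      by_cases hx : φ x = ⊤
      · simp [hx, EReal.sub_top]
      have hr : φ x = (((φ x).toReal : ℝ) : EReal) := (EReal.coe_toReal hx (hφnb x)).symm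
      set r := (φ x).toReal with hrdef
      have hr0 : (0:ℝ) ≤ r := by
        have := hφ0 x
        rw [hr] at this
        exact_mod_cast this
      have h1 : ((ψ x - r : ℝ) : EReal) ≤ ((c : ℝ) : EReal) := by
        rw [EReal.coe_sub, ← hr, ← hc]
        exact le_iSup (fun z : X => (ψ z : EReal) - φ z) x
      have h1' : ψ x - r ≤ c := EReal.coe_le_coe_iff.mp h1
      have hsm : (t • ψ) x = t * ψ x := by simp
      rw [hr, hsm, ← EReal.coe_sub, EReal.coe_le_coe_iff]
      nlinarith
    set M := max c 0 with hMdef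
    set β' := (M * β + g 0)/(M + 1) with hβ'def
    have hM0 : (0:ℝ) ≤ M := le_max_right _ _
    have hM1 : (0:ℝ) < M + 1 := by linarith
    have hβ'lt : β' < β := by rw [div_lt_iff₀ hM1]; nlinarith
    have hg0β' : g 0 ≤ β' := by rw [le_div_iff₀ hM1]; nlinarith
    have hdich : ∀ t : ℝ, 0 < t → t < 1 → g (t • ψ) < β → g (t • ψ) ≤ β' := by
      intro t ht0 ht1 htβ
      have h3 : Fr (t • ψ) ≤ t * c := by
        have := hscale t ht0 ht1
        rw [hconjeq _ htβ] at this
        exact_mod_cast this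
      have htc : t * c ≤ M := by
        rcases le_total c 0 with h | h
        · nlinarith [le_max_right c 0]
        · nlinarith [le_max_left c 0]
      have hb : (0:ℝ) < β - g (t • ψ) := by linarith
      rw [hFr] at h3
      rw [div_le_iff₀ hb] at h3
      rw [le_div_iff₀ hM1]
      nlinarith
    have hmid : (β' + β)/2 ∈ Set.Icc (g ((0:ℝ) • ψ)) (g ((1:ℝ) • ψ)) := by
      constructor
      · rw [zero_smul]; linarith
      · rw [one_smul]; linarith
    obtain ⟨t, ht, hqt0⟩ := intermediate_value_Icc zero_le_one ((hq ψ).continuousOn) hmid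
    have hqt : g (t • ψ) = (β' + β)/2 := hqt0
    have ht0 : t ≠ 0 := by rintro rfl; rw [zero_smul] at hqt; linarith
    have ht1 : t ≠ 1 := by rintro rfl; rw [one_smul] at hqt; linarith
    have hlt : g (t • ψ) < β := by rw [hqt]; linarith
    have := hdich t (lt_of_le_of_ne ht.1 (Ne.symm ht0)) (lt_of_le_of_ne ht.2 ht1) hlt
    rw [hqt] at this
    linarith
  refine ⟨φ, hconjnebot, by rw [hconjeq 0 h0, hFr0]; rfl, ?_, fun ψ hψ => hdom ψ hψ, ?_, ?_⟩
  · -- asympCone ⊆ dom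
    rintro y ⟨x, hxK, hray⟩
    have hyβ : g y < β := aux_ray_lsc g hlsc hconv β h0 y x fun l hl => hray l hl
    simp only [Set.mem_setOf_eq, hconjeq y hyβ]
    exact EReal.coe_ne_top _
  · -- condition (iii)
    rintro ψ ⟨hψK, hψnc⟩
    simp only [Set.mem_setOf_eq] at hψK
    by_contra hS
    set S := {v : EReal | ∃ η : ℝ, 0 < η ∧ conjugate φ (η • ψ) ≠ ⊤ ∧ v = conjugate φ (η • ψ)}
      with hSdef
    have hmemS : ∀ η : ℝ, 0 < η → g (η • ψ) < β → ((Fr (η • ψ) : ℝ) : EReal) ∈ S := by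
      intro η hη hηβ
      exact ⟨η, hη, by rw [hconjeq _ hηβ]; exact EReal.coe_ne_top _, (hconjeq _ hηβ).symm⟩
    have hmem1 : ((Fr ψ : ℝ) : EReal) ∈ S := by
      have := hmemS 1 one_pos (by rwa [one_smul])
      rwa [one_smul] at this
    have hnb : sSup S ≠ ⊥ := by
      intro h
      have := le_sSup hmem1
      rw [h, le_bot_iff] at this
      exact EReal.coe_ne_bot _ this
    set c := (sSup S).toReal with hcdef
    have hc : sSup S = ((c : ℝ) : EReal) := (EReal.coe_toReal hS hnb).symm
    have hbound : ∀ η : ℝ, 0 < η → g (η • ψ) < β → Fr (η • ψ) ≤ c := by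
      intro η hη hηβ
      have := le_sSup (hmemS η hη hηβ)
      rw [hc] at this
      exact_mod_cast this
    have hψnc' : ¬ (∃ x ∈ {φ : X →L[ℝ] ℝ | g φ < β}, ∀ l : ℝ, 0 ≤ l →
        x + l • ψ ∈ {φ : X →L[ℝ] ℝ | g φ < β}) := hψnc
    push_neg at hψnc'
    obtain ⟨l, hl0, hl⟩ := hψnc' ψ hψK
    have hlβ : β ≤ g ((1 + l) • ψ) := by
      have h1l : ψ + l • ψ = (1 + l) • ψ := by rw [add_smul, one_smul]
      have := hl
      simp only [Set.mem_setOf_eq, h1l] at this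
      linarith [not_lt.mp this]
    set M := max c 0 with hMdef
    set β' := (M * β + g 0)/(M + 1) with hβ'def
    have hM0 : (0:ℝ) ≤ M := le_max_right _ _
    have hMc : c ≤ M := le_max_left _ _
    have hM1 : (0:ℝ) < M + 1 := by linarith
    have hβ'lt : β' < β := by rw [div_lt_iff₀ hM1]; nlinarith
    have hg0β' : g 0 ≤ β' := by rw [le_div_iff₀ hM1]; nlinarith
    have hdich : ∀ t : ℝ, 0 < t → g (t • ψ) < β → g (t • ψ) ≤ β' := by
      intro t ht0 htβ
      have h3 : Fr (t • ψ) ≤ M := le_trans (hbound t ht0 htβ) hMc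
      have hb : (0:ℝ) < β - g (t • ψ) := by linarith
      rw [hFr] at h3
      rw [div_le_iff₀ hb] at h3
      rw [le_div_iff₀ hM1]
      nlinarith
    have hmid : (β' + β)/2 ∈ Set.Icc (g ((1:ℝ) • ψ)) (g ((1 + l) • ψ)) := by
      constructor
      · have : g ((1:ℝ) • ψ) ≤ β' := hdich 1 one_pos (by rwa [one_smul])
        linarith
      · linarith
    obtain ⟨t, ht, hqt0⟩ := intermediate_value_Icc
      (by linarith : (1:ℝ) ≤ 1 + l) ((hq ψ).continuousOn) hmid
    have hqt : g (t • ψ) = (β' + β)/2 := hqt0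
    have ht0 : (0:ℝ) < t := lt_of_lt_of_le one_pos ht.1
    have := hdich t ht0 (by rw [hqt]; linarith)
    rw [hqt] at this
    linarith
  · -- condition (iv)
    intro ψ hψne
    have hψ := hdom ψ hψne
    obtain ⟨x, hx⟩ := hsubF ψ hψ
    refine ⟨x, fun y => ?_⟩
    have hφx := hattain ψ hψ x hx
    rw [hφx, ← EReal.coe_add]
    have heq : ψ (y - x) + (ψ x - Fr ψ) = ψ y - Fr ψ := by rw [map_sub]; ring
    rw [heq]
    have heq2 : ((ψ y - Fr ψ : ℝ) : EReal) = (ψ y : EReal) - F ψ := by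
      simp [hF, if_pos hψ, EReal.coe_sub]
    rw [heq2]
    exact le_iSup (fun χ : X →L[ℝ] ℝ => (χ y : EReal) - F χ) ψ

end
end

section
/- Let X be a complete Hausdorff locally convex space and g : X* → ℝ a weak*-lower semicontinuous convex function such that 0 ∈ lev_g^<(α, β) := {x* ∈ X* : α < g(x*) < β} and ∂g(x*) ≠ ∅ for every x* ∈ lev_g^<(α, β), where the subdifferential of g is taken with respect to the pairing of X* with X. Then there exists a weak*-neighborhood U ⊆ X* of zero such that ℰ(U ∩ lev_g^<(α, β)) ≠ ∅. -/
open Topology Set Pointwise Bornology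

noncomputable section

namespace E36
open scoped Classical

/-- one-sided gradient inequality for `t ↦ t⁻¹`. -/
lemma inv_grad {A B : ℝ} (hA : 0 < A) (hB : 0 < B) :
    B⁻¹ + B⁻¹ * B⁻¹ * (B - A) ≤ A⁻¹ := by
  rw [← sub_nonneg]
  have h : A⁻¹ - (B⁻¹ + B⁻¹ * B⁻¹ * (B - A)) = (B - A) ^ 2 / (A * B ^ 2) := by
    field_simp; ring
  rw [h]; positivity

def thetaR (β c t : ℝ) : ℝ := (β - t)⁻¹ - (β - c)⁻¹

def rhoR (ε u : ℝ) : ℝ := (ε - u)⁻¹ + (ε + u)⁻¹ - 2 / ε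

lemma thetaR_self (β c : ℝ) : thetaR β c c = 0 := sub_self _

lemma rhoR_zero {ε : ℝ} (hε : 0 < ε) : rhoR ε 0 = 0 := by
  simp [rhoR]; rw [div_eq_mul_inv]; ring

lemma rhoR_nonneg {ε u : ℝ} (hε : 0 < ε) (hu : |u| < ε) : 0 ≤ rhoR ε u := by
  have h1 : 0 < ε - u := by cases abs_lt.mp hu; linarith
  have h2 : 0 < ε + u := by cases abs_lt.mp hu; linarith
  have : 2 / ε ≤ (ε - u)⁻¹ + (ε + u)⁻¹ := by
    rw [div_le_iff₀ hε, ← sub_nonneg]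
    have he : ((ε - u)⁻¹ + (ε + u)⁻¹) * ε - 2 = (u ^ 2 * 2) / ((ε - u) * (ε + u)) := by
      field_simp; ring
    rw [he]; positivity
  unfold rhoR; linarith

lemma thetaR_lb {β c t : ℝ} (ht : t < β) : -(β - c)⁻¹ ≤ thetaR β c t := by
  have h : 0 < β - t := by linarith
  have : 0 < (β - t)⁻¹ := by positivity
  unfold thetaR; linarith

lemma thetaR_grad {β c u t : ℝ} (hu : u < β) (ht : t < β) :
    thetaR β c t + (β - t)⁻¹ * (β - t)⁻¹ * (u - t) ≤ thetaR β c u := by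
  have h := inv_grad (A := β - u) (B := β - t) (by linarith) (by linarith)
  have he : β - t - (β - u) = u - t := by ring
  rw [he] at h
  unfold thetaR; linarith

lemma rhoR_grad {ε u t : ℝ} (hu : |u| < ε) (ht : |t| < ε) :
    rhoR ε t + ((ε - t)⁻¹ * (ε - t)⁻¹ - (ε + t)⁻¹ * (ε + t)⁻¹) * (u - t) ≤ rhoR ε u := by
  obtain ⟨hu1, hu2⟩ := abs_lt.mp hu
  obtain ⟨ht1, ht2⟩ := abs_lt.mp ht
  have h1 := inv_grad (A := ε - u) (B := ε - t) (by linarith) (by linarith)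
  have h2 := inv_grad (A := ε + u) (B := ε + t) (by linarith) (by linarith)
  have e1 : ε - t - (ε - u) = u - t := by ring
  have e2 : ε + t - (ε + u) = -(u - t) := by ring
  rw [e1] at h1; rw [e2] at h2
  unfold rhoR; nlinarith [h1, h2]

lemma thetaR_blow {β c t δ : ℝ} (hδ : 0 < δ) (h1 : β - δ < t) (h2 : t < β) :
    δ⁻¹ - (β - c)⁻¹ ≤ thetaR β c t := by
  have h3 : 0 < β - t := by linarith
  have : δ⁻¹ ≤ (β - t)⁻¹ := inv_anti₀ h3 (by linarith)
  unfold thetaR; linarith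

lemma rhoR_blow {ε u : ℝ} (hε : 0 < ε) (hu : |u| < ε) :
    (ε - |u|)⁻¹ - 2 / ε ≤ rhoR ε u := by
  obtain ⟨h1, h2⟩ := abs_lt.mp hu
  rcases abs_cases u with ⟨he, -⟩ | ⟨he, -⟩ <;> rw [he]
  · have hp : 0 < ε + u := by linarith
    have : 0 < (ε + u)⁻¹ := by positivity
    unfold rhoR; linarith
  · have hp : 0 < ε - u := by linarith
    have : 0 < (ε - u)⁻¹ := by positivity
    have he2 : ε - -u = ε + u := by ring
    rw [he2]
    unfold rhoR; linarith



section Main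

variable {X : Type*} [AddCommGroup X] [Module ℝ X] [TopologicalSpace X]

variable (g : (X →L[ℝ] ℝ) → ℝ) (β ε : ℝ) (s : Finset X)

def DD : Set (X →L[ℝ] ℝ) := {ψ | g ψ < β ∧ ∀ x ∈ s, |ψ x| < ε}

def hR (ψ : X →L[ℝ] ℝ) : ℝ := thetaR β (g 0) (g ψ) + ∑ x ∈ s, rhoR ε (ψ x)

def hE (ψ : X →L[ℝ] ℝ) : EReal :=
  if ψ ∈ DD g β ε s then ((hR g β ε s ψ : ℝ) : EReal) else ⊤

def Phi (x : X) : EReal := ⨆ χ : X →L[ℝ] ℝ, ((χ x : ℝ) : EReal) - hE g β ε s χ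

variable {g β ε s}

lemma zero_mem_DD (hc : g 0 < β) (hε : 0 < ε) : (0 : X →L[ℝ] ℝ) ∈ DD g β ε s :=
  ⟨hc, fun x _ => by simpa using hε⟩

lemma hR_zero (hε : 0 < ε) : hR g β ε s 0 = 0 := by
  unfold hR
  rw [thetaR_self]
  simp [rhoR_zero hε]

lemma hE_zero (hc : g 0 < β) (hε : 0 < ε) : hE g β ε s 0 = (0 : EReal) := by
  rw [hE, if_pos (zero_mem_DD hc hε), hR_zero hε]; rfl

lemma hR_lb {ψ : X →L[ℝ] ℝ} (hε : 0 < ε) (hψ : ψ ∈ DD g β ε s) :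
    -(β - g 0)⁻¹ ≤ hR g β ε s ψ := by
  have h1 : 0 ≤ ∑ x ∈ s, rhoR ε (ψ x) :=
    Finset.sum_nonneg fun x hx => rhoR_nonneg hε (hψ.2 x hx)
  have h2 := thetaR_lb (c := g 0) hψ.1
  unfold hR; linarith

lemma Phi_ge (x : X) (χ : X →L[ℝ] ℝ) : ((χ x : ℝ) : EReal) - hE g β ε s χ ≤ Phi g β ε s x :=
  le_iSup (fun χ : X →L[ℝ] ℝ => ((χ x : ℝ) : EReal) - hE g β ε s χ) χ

lemma Phi_nonneg (hc : g 0 < β) (hε : 0 < ε) (x : X) : (0 : EReal) ≤ Phi g β ε s x := by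
  have := Phi_ge (g := g) (β := β) (ε := ε) (s := s) x 0
  rw [hE_zero hc hε] at this
  simpa using this

/-- helper : `p - b ≤ r` in `EReal` from `↑(p - r) ≤ b`. -/
lemma he1 {p r : ℝ} {b : EReal} (h : ((p - r : ℝ) : EReal) ≤ b) :
    (p : EReal) - b ≤ (r : EReal) := by
  induction b using EReal.rec with
  | bot =>
    rw [le_bot_iff] at h
    exact absurd h (EReal.coe_ne_bot _)
  | coe q =>
    have h' : p - r ≤ q := by exact_mod_cast h
    have h'' : p - q ≤ r := by linarith
    exact_mod_cast h''
  | top =>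
    rw [show (p : EReal) - ⊤ = ⊥ by rfl]
    exact bot_le

/-- The global subgradient inequality at points of `DD`. -/
lemma subgrad (hconv : ConvexOn ℝ Set.univ g) (hε : 0 < ε)
    (hsubD : ∀ ψ ∈ DD g β ε s, (subdiffStar g ψ).Nonempty)
    {ψ : X →L[ℝ] ℝ} (hψ : ψ ∈ DD g β ε s) :
    ∃ z : X, ∀ χ ∈ DD g β ε s,
      hR g β ε s ψ + (χ z - ψ z) ≤ hR g β ε s χ := by
  obtain ⟨w, hw⟩ := hsubD ψ hψ
  classical
  refine ⟨((β - g ψ)⁻¹ * (β - g ψ)⁻¹) • w +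
    ∑ x ∈ s, ((((ε - ψ x)⁻¹ * (ε - ψ x)⁻¹ - (ε + ψ x)⁻¹ * (ε + ψ x)⁻¹) : ℝ)) • x,
    fun χ hχ => ?_⟩
  have key : ∀ ξ : X →L[ℝ] ℝ, ξ (((β - g ψ)⁻¹ * (β - g ψ)⁻¹) • w +
      ∑ x ∈ s, (((ε - ψ x)⁻¹ * (ε - ψ x)⁻¹ - (ε + ψ x)⁻¹ * (ε + ψ x)⁻¹) : ℝ) • x) =
      ((β - g ψ)⁻¹ * (β - g ψ)⁻¹) * ξ w +
      ∑ x ∈ s, ((ε - ψ x)⁻¹ * (ε - ψ x)⁻¹ - (ε + ψ x)⁻¹ * (ε + ψ x)⁻¹) * ξ x := by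
    intro ξ
    rw [map_add, map_smul, map_sum]
    simp [smul_eq_mul]
  rw [key, key]
  have hwχ : χ w - ψ w + g ψ ≤ g χ := by
    have := hw χ; rwa [ContinuousLinearMap.sub_apply] at this
  have hbp : 0 < β - g ψ := by linarith [hψ.1]
  have hθnn : (0:ℝ) ≤ (β - g ψ)⁻¹ * (β - g ψ)⁻¹ := by positivity
  have h1 : (β - g ψ)⁻¹ * (β - g ψ)⁻¹ * (χ w - ψ w) ≤
      (β - g ψ)⁻¹ * (β - g ψ)⁻¹ * (g χ - g ψ) :=
    mul_le_mul_of_nonneg_left (by linarith) hθnn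
  have h2 := thetaR_grad (c := g 0) hχ.1 hψ.1
  have hsum : ∑ x ∈ s, (rhoR ε (ψ x) +
      ((ε - ψ x)⁻¹ * (ε - ψ x)⁻¹ - (ε + ψ x)⁻¹ * (ε + ψ x)⁻¹) * (χ x - ψ x)) ≤
      ∑ x ∈ s, rhoR ε (χ x) :=
    Finset.sum_le_sum fun x hx => rhoR_grad (hχ.2 x hx) (hψ.2 x hx)
  rw [Finset.sum_add_distrib] at hsum
  have hsplit : ∑ x ∈ s, ((ε - ψ x)⁻¹ * (ε - ψ x)⁻¹ - (ε + ψ x)⁻¹ * (ε + ψ x)⁻¹) * (χ x - ψ x)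
      = (∑ x ∈ s, ((ε - ψ x)⁻¹ * (ε - ψ x)⁻¹ - (ε + ψ x)⁻¹ * (ε + ψ x)⁻¹) * χ x)
      - ∑ x ∈ s, ((ε - ψ x)⁻¹ * (ε - ψ x)⁻¹ - (ε + ψ x)⁻¹ * (ε + ψ x)⁻¹) * ψ x := by
    rw [← Finset.sum_sub_distrib]
    exact Finset.sum_congr rfl fun x _ => by ring
  rw [hsplit] at hsum
  unfold hR
  linarith

lemma main_point (hconv : ConvexOn ℝ Set.univ g) (hε : 0 < ε)
    (hsubD : ∀ ψ ∈ DD g β ε s, (subdiffStar g ψ).Nonempty)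
    {ψ : X →L[ℝ] ℝ} (hψ : ψ ∈ DD g β ε s) :
    ∃ z : X, Phi g β ε s z = ((ψ z - hR g β ε s ψ : ℝ) : EReal) ∧
      conjugate (Phi g β ε s) ψ = ((hR g β ε s ψ : ℝ) : EReal) ∧
      ψ ∈ subdiff (Phi g β ε s) z := by
  obtain ⟨z, hz⟩ := subgrad hconv hε hsubD hψ
  have hEψ : hE g β ε s ψ = ((hR g β ε s ψ : ℝ) : EReal) := if_pos hψ
  have hPhiz : Phi g β ε s z = ((ψ z - hR g β ε s ψ : ℝ) : EReal) := by
    apply le_antisymm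
    · apply iSup_le; intro χ
      apply he1
      by_cases hχ : χ ∈ DD g β ε s
      · rw [hE, if_pos hχ, EReal.coe_le_coe_iff]
        linarith [hz χ hχ]
      · rw [hE, if_neg hχ]; exact le_top
    · have h := Phi_ge (g := g) (β := β) (ε := ε) (s := s) z ψ
      rw [hEψ, ← EReal.coe_sub] at h
      exact h
  refine ⟨z, hPhiz, ?_, ?_⟩
  · apply le_antisymm
    · apply iSup_le; intro x
      apply he1
      have h := Phi_ge (g := g) (β := β) (ε := ε) (s := s) x ψ
      rw [hEψ, ← EReal.coe_sub] at h
      exact h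
    · have h : ((ψ z : ℝ) : EReal) - Phi g β ε s z ≤ conjugate (Phi g β ε s) ψ :=
        le_iSup (fun x : X => ((ψ x : ℝ) : EReal) - Phi g β ε s x) z
      rw [hPhiz, ← EReal.coe_sub] at h
      have e : ψ z - (ψ z - hR g β ε s ψ) = hR g β ε s ψ := by ring
      rw [e] at h
      exact h
  · intro y
    rw [hPhiz]
    have e : ((ψ (y - z) : ℝ) : EReal) + ((ψ z - hR g β ε s ψ : ℝ) : EReal)
        = ((ψ y - hR g β ε s ψ : ℝ) : EReal) := by
      rw [← EReal.coe_add, map_sub]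
      norm_num
    rw [e]
    have h := Phi_ge (g := g) (β := β) (ε := ε) (s := s) y ψ
    rw [hEψ, ← EReal.coe_sub] at h
    exact h

lemma conj_ne_bot (hconv : ConvexOn ℝ Set.univ g) (hc : g 0 < β) (hε : 0 < ε)
    (hsubD : ∀ ψ ∈ DD g β ε s, (subdiffStar g ψ).Nonempty)
    (χ : X →L[ℝ] ℝ) : conjugate (Phi g β ε s) χ ≠ ⊥ := by
  obtain ⟨z, hPhiz, -, -⟩ := main_point hconv hε hsubD (zero_mem_DD hc hε)
  have h : ((χ z : ℝ) : EReal) - Phi g β ε s z ≤ conjugate (Phi g β ε s) χ :=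
    le_iSup (fun x : X => ((χ x : ℝ) : EReal) - Phi g β ε s x) z
  rw [hPhiz, ← EReal.coe_sub] at h
  intro hbot
  rw [hbot, le_bot_iff] at h
  exact EReal.coe_ne_bot _ h

lemma conj_zero (hconv : ConvexOn ℝ Set.univ g) (hc : g 0 < β) (hε : 0 < ε)
    (hsubD : ∀ ψ ∈ DD g β ε s, (subdiffStar g ψ).Nonempty) :
    conjugate (Phi g β ε s) 0 = (0 : EReal) := by
  obtain ⟨z, -, hconj, -⟩ := main_point hconv hε hsubD (zero_mem_DD hc hε)
  rw [hconj, hR_zero hε]; rfl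

lemma scale (hconv : ConvexOn ℝ Set.univ g) (hc : g 0 < β) (hε : 0 < ε)
    (ψ : X →L[ℝ] ℝ) {ν r : ℝ} (hν0 : 0 < ν) (hν1 : ν ≤ 1) (hr : 0 ≤ r)
    (hle : conjugate (Phi g β ε s) ψ ≤ (r : EReal)) :
    conjugate (Phi g β ε s) (ν • ψ) ≤ ((ν * r : ℝ) : EReal) := by
  apply iSup_le; intro x
  have hx : ((ψ x : ℝ) : EReal) - Phi g β ε s x ≤ (r : EReal) :=
    le_trans (le_iSup (fun x : X => ((ψ x : ℝ) : EReal) - Phi g β ε s x) x) hle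
  have hb0 := Phi_nonneg (g := g) (β := β) (ε := ε) (s := s) hc hε x
  have happ : ((ν • ψ) x : ℝ) = ν * ψ x := rfl
  rw [happ]
  set b := Phi g β ε s x with hb
  clear_value b
  induction b using EReal.rec with
  | bot => simp at hb0
  | coe p =>
    rw [← EReal.coe_sub, EReal.coe_le_coe_iff] at hx ⊢
    have hb0' : (0:ℝ) ≤ p := by exact_mod_cast hb0
    nlinarith
  | top =>
    rw [show ((ν * ψ x : ℝ) : EReal) - ⊤ = ⊥ by rfl]
    exact bot_le

lemma conj_top_of_blow (hconv : ConvexOn ℝ Set.univ g) (hc : g 0 < β) (hε : 0 < ε)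
    (hsubD : ∀ ψ ∈ DD g β ε s, (subdiffStar g ψ).Nonempty) (ψ : X →L[ℝ] ℝ)
    (hblow : ∀ M : ℝ, ∃ η : ℝ, 0 < η ∧ η ≤ 1 ∧ η • ψ ∈ DD g β ε s ∧ M ≤ hR g β ε s (η • ψ)) :
    conjugate (Phi g β ε s) ψ = ⊤ := by
  by_contra hne
  have hnb := conj_ne_bot hconv hc hε hsubD ψ
  lift conjugate (Phi g β ε s) ψ to ℝ using ⟨hne, hnb⟩ with r hrconj
  set r' : ℝ := max r 0 with hr'
  obtain ⟨η, hη0, hη1, hηD, hηM⟩ := hblow (r' + 1)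
  obtain ⟨z, -, hconj, -⟩ := main_point hconv hε hsubD hηD
  have hs := scale hconv hc hε ψ hη0 hη1 (le_max_right r 0)
    (by rw [← hrconj]; exact_mod_cast le_max_left r 0)
  rw [hconj, EReal.coe_le_coe_iff] at hs
  nlinarith [le_max_right r 0]

lemma escape (hconv : ConvexOn ℝ Set.univ g) (hc : g 0 < β) (hε : 0 < ε)
    (hsubD : ∀ ψ ∈ DD g β ε s, (subdiffStar g ψ).Nonempty)
    {ψ : X →L[ℝ] ℝ} {x₀ : X} (hx₀ : x₀ ∈ s) (hgt : ε < |ψ x₀|) :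
    conjugate (Phi g β ε s) ψ = ⊤ := by
  by_contra hne
  have hnb := conj_ne_bot hconv hc hε hsubD ψ
  lift conjugate (Phi g β ε s) ψ to ℝ using ⟨hne, hnb⟩ with r hrconj
  set m : ℝ := (β - g 0)⁻¹ with hm
  set T : ℝ := (max r 0 + m + 1) / (|ψ x₀| - ε) with hT
  have hm0 : 0 < m := by rw [hm]; have : 0 < β - g 0 := by linarith
                         positivity
  have hT0 : 0 < T := by
    rw [hT]; have h1 : (0:ℝ) < |ψ x₀| - ε := by linarith
    have h2 : (0:ℝ) < max r 0 + m + 1 := by positivity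
    positivity
  set e : ℝ := if 0 ≤ ψ x₀ then 1 else -1 with he
  set w : X := (T * e) • x₀ with hw
  have hPhiw : Phi g β ε s w ≤ ((T * ε + m : ℝ) : EReal) := by
    apply iSup_le; intro χ
    by_cases hχ : χ ∈ DD g β ε s
    · rw [hE, if_pos hχ, ← EReal.coe_sub, EReal.coe_le_coe_iff]
      have h1 : χ w = (T * e) * χ x₀ := by
        rw [hw, map_smul, smul_eq_mul]
      have h2 : |χ x₀| < ε := hχ.2 x₀ hx₀
      have h3 : -hR g β ε s χ ≤ m := by
        have := hR_lb hε hχ; rw [hm]; linarith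
      have h4 : (T * e) * χ x₀ ≤ T * ε := by
        have he2 : e = 1 ∨ e = -1 := by
          rw [he]; split <;> simp
        obtain ⟨hl, hr2⟩ := abs_lt.mp h2
        rcases he2 with h | h <;> rw [h] <;> nlinarith
      rw [h1]; linarith
    · rw [hE, if_neg hχ]
      rw [show ((χ w : ℝ) : EReal) - ⊤ = ⊥ from rfl]
      exact bot_le
  have hψw : ψ w = T * |ψ x₀| := by
    rw [hw, map_smul, smul_eq_mul, he]
    rcases le_or_gt 0 (ψ x₀) with h | h
    · rw [if_pos h, abs_of_nonneg h]; ring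
    · rw [if_neg (not_le.mpr h), abs_of_neg h]; ring
  have hchain : ((T * |ψ x₀| - (T * ε + m) : ℝ) : EReal) ≤ (r : EReal) := by
    calc ((T * |ψ x₀| - (T * ε + m) : ℝ) : EReal)
        = ((ψ w : ℝ) : EReal) - ((T * ε + m : ℝ) : EReal) := by
          rw [hψw, ← EReal.coe_sub]
      _ ≤ ((ψ w : ℝ) : EReal) - Phi g β ε s w := EReal.sub_le_sub le_rfl hPhiw
      _ ≤ conjugate (Phi g β ε s) ψ :=
          le_iSup (fun x : X => ((ψ x : ℝ) : EReal) - Phi g β ε s x) w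
      _ = (r : EReal) := hrconj.symm
  rw [EReal.coe_le_coe_iff] at hchain
  have hd : |ψ x₀| - ε ≠ 0 := by linarith
  have hTval : T * (|ψ x₀| - ε) = max r 0 + m + 1 := by
    rw [hT, div_mul_cancel₀ _ hd]
  nlinarith [le_max_left r 0]

variable (g β ε s) in
def AA (ψ : X →L[ℝ] ℝ) : Set ℝ :=
  {η : ℝ | 0 ≤ η ∧ g (η • ψ) < β ∧ ∀ x ∈ s, |η * ψ x| ≤ ε}

lemma AA_zero (hc : g 0 < β) (hε : 0 < ε) (ψ : X →L[ℝ] ℝ) : (0:ℝ) ∈ AA g β ε s ψ :=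
  ⟨le_refl 0, by simpa [zero_smul] using hc, fun x _ => by simpa using hε.le⟩

lemma convex_combo (hconv : ConvexOn ℝ Set.univ g) (χ : X →L[ℝ] ℝ) {t : ℝ}
    (ht0 : 0 ≤ t) (ht1 : t ≤ 1) : g (t • χ) ≤ t * g χ + (1 - t) * g 0 := by
  have h := hconv.2 (Set.mem_univ χ) (Set.mem_univ (0 : X →L[ℝ] ℝ)) ht0
    (by linarith : (0:ℝ) ≤ 1 - t) (by ring)
  simpa [smul_eq_mul] using h

lemma AA_dc (hconv : ConvexOn ℝ Set.univ g) (hc : g 0 < β) (hε : 0 < ε) {ψ : X →L[ℝ] ℝ} {η' : ℝ}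
    (hη' : η' ∈ AA g β ε s ψ) {η : ℝ} (h0 : 0 ≤ η) (h1 : η ≤ η') : η ∈ AA g β ε s ψ := by
  rcases eq_or_lt_of_le (h0.trans h1) with h | hη'pos
  · have : η = 0 := le_antisymm (by rw [← h] at h1; exact h1) h0
    rw [this]; exact AA_zero hc hε ψ
  · have ht0 : 0 ≤ η / η' := div_nonneg h0 hη'pos.le
    have ht1 : η / η' ≤ 1 := div_le_one_of_le₀ h1 hη'pos.le
    have hsm : (η / η') • (η' • ψ) = η • ψ := by
      rw [smul_smul]; congr 1; field_simp
    refine ⟨h0, ?_, fun x hx => ?_⟩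
    · have h2 := convex_combo hconv (η' • ψ) ht0 ht1
      rw [hsm] at h2
      have h3 := hη'.2.1
      rcases eq_or_lt_of_le ht1 with h | h
      · have hee : η = η' := by
          field_simp at h; exact h
        rw [hee]; exact h3
      · nlinarith [mul_nonneg ht0 (sub_pos.mpr h3).le,
          mul_pos (sub_pos.mpr h) (sub_pos.mpr hc)]
    · have h2 := hη'.2.2 x hx
      rw [abs_mul] at h2 ⊢
      rw [abs_of_nonneg h0]
      rw [abs_of_nonneg (h0.trans h1)] at h2
      nlinarith [abs_nonneg (ψ x)]

lemma AA_sup_coord (hc : g 0 < β) (hε : 0 < ε) {ψ : X →L[ℝ] ℝ}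
    (hA : BddAbove (AA g β ε s ψ)) {x : X} (hx : x ∈ s) :
    sSup (AA g β ε s ψ) * |ψ x| ≤ ε := by
  by_cases h : ψ x = 0
  · simp [h]; positivity
  · have hpos : 0 < |ψ x| := abs_pos.mpr h
    have hle : sSup (AA g β ε s ψ) ≤ ε / |ψ x| := by
      apply csSup_le ⟨0, AA_zero hc hε ψ⟩
      intro η hη
      have h2 := hη.2.2 x hx
      rw [abs_mul, abs_of_nonneg hη.1] at h2
      rw [le_div_iff₀ hpos]
      exact h2
    calc sSup (AA g β ε s ψ) * |ψ x| ≤ (ε / |ψ x|) * |ψ x| :=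
          mul_le_mul_of_nonneg_right hle hpos.le
      _ = ε := div_mul_cancel₀ ε hpos.ne'

lemma mem_AA_of_lt_sSup (hconv : ConvexOn ℝ Set.univ g) (hc : g 0 < β) (hε : 0 < ε)
    {ψ : X →L[ℝ] ℝ} {η : ℝ} (h0 : 0 ≤ η) (hη : η < sSup (AA g β ε s ψ)) :
    η ∈ AA g β ε s ψ := by
  obtain ⟨η', hη', hlt⟩ := exists_lt_of_lt_csSup ⟨0, AA_zero hc hε ψ⟩ hη
  exact AA_dc hconv hc hε hη' h0 hlt.le

lemma DD_of_lt_sSup (hconv : ConvexOn ℝ Set.univ g) (hc : g 0 < β) (hε : 0 < ε)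
    {ψ : X →L[ℝ] ℝ} (hA : BddAbove (AA g β ε s ψ)) {η : ℝ} (h0 : 0 ≤ η)
    (hη : η < sSup (AA g β ε s ψ)) : η • ψ ∈ DD g β ε s := by
  have hmem := mem_AA_of_lt_sSup hconv hc hε h0 hη
  refine ⟨hmem.2.1, fun x hx => ?_⟩
  have hcoord := AA_sup_coord hc hε hA hx
  rw [ContinuousLinearMap.smul_apply, smul_eq_mul, abs_mul, abs_of_nonneg h0]
  by_cases h : ψ x = 0
  · rw [h]; simpa using hε
  · have hpos : 0 < |ψ x| := abs_pos.mpr h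
    calc η * |ψ x| < sSup (AA g β ε s ψ) * |ψ x| := by
          exact mul_lt_mul_of_pos_right hη hpos
      _ ≤ ε := hcoord

lemma blow (hconv : ConvexOn ℝ Set.univ g) (hc : g 0 < β) (hε : 0 < ε)
    (hlsc : LowerSemicontinuous (fun φ : WeakDual ℝ X => g φ))
    {ψ : X →L[ℝ] ℝ} (hA : BddAbove (AA g β ε s ψ)) (ha : 0 < sSup (AA g β ε s ψ)) :
    ∀ M : ℝ, ∃ η : ℝ, 0 < η ∧ η < sSup (AA g β ε s ψ) ∧ η • ψ ∈ DD g β ε s ∧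
      M ≤ hR g β ε s (η • ψ) := by
  set a := sSup (AA g β ε s ψ) with haa
  set m : ℝ := (β - g 0)⁻¹ with hm
  have hm0 : 0 < m := by
    rw [hm]; have : 0 < β - g 0 := by linarith
    positivity
  by_cases hcase : ∃ x ∈ s, ε ≤ a * |ψ x|
  -- ρ-blow case
  · obtain ⟨x₀, hx₀, hx₀ε⟩ := hcase
    have hxeq : a * |ψ x₀| = ε := le_antisymm (AA_sup_coord hc hε hA hx₀) hx₀ε
    intro M
    set C : ℝ := max (M + 2 / ε + m) 1 with hC
    have hC0 : 0 < C := lt_of_lt_of_le one_pos (le_max_right _ _)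
    set δ : ℝ := min (1/2) ((ε * C)⁻¹) with hδ
    have hδ0 : 0 < δ := by
      rw [hδ]; apply lt_min (by norm_num)
      positivity
    have hδ1 : δ ≤ 1/2 := min_le_left _ _
    set η : ℝ := (1 - δ) * a with hη
    have hη0 : 0 < η := by
      rw [hη]; have : 0 < 1 - δ := by linarith
      positivity
    have hηa : η < a := by
      rw [hη]; nlinarith
    have hD := DD_of_lt_sSup hconv hc hε hA hη0.le hηa
    refine ⟨η, hη0, hηa, hD, ?_⟩
    have happ : ∀ x : X, (η • ψ) x = η * ψ x := fun x => rfl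
    have habs : |η * ψ x₀| = (1 - δ) * ε := by
      rw [abs_mul, abs_of_nonneg hη0.le, hη, mul_assoc, hxeq]
    have hsum : rhoR ε ((η • ψ) x₀) ≤ ∑ x ∈ s, rhoR ε ((η • ψ) x) :=
      Finset.single_le_sum (fun x hx => rhoR_nonneg hε (hD.2 x hx)) hx₀
    have hb := rhoR_blow hε (u := (η • ψ) x₀) (hD.2 x₀ hx₀)
    rw [happ, habs] at hb
    have hεδ : ε - (1 - δ) * ε = δ * ε := by ring
    rw [hεδ] at hb
    have hinv : C ≤ (δ * ε)⁻¹ := by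
      have h1 : δ * ε ≤ C⁻¹ := by
        have h2 : δ ≤ (ε * C)⁻¹ := min_le_right _ _
        calc δ * ε ≤ (ε * C)⁻¹ * ε := mul_le_mul_of_nonneg_right h2 hε.le
          _ = C⁻¹ := by field_simp
      calc C = (C⁻¹)⁻¹ := (inv_inv C).symm
        _ ≤ (δ * ε)⁻¹ := by
            apply inv_anti₀ (by positivity) h1
    have hθ := thetaR_lb (c := g 0) hD.1
    have hCM : M + 2 / ε + m ≤ C := le_max_left _ _
    unfold hR
    rw [happ] at hsum
    have h6 : M + 2/ε + m ≤ (δ * ε)⁻¹ := le_trans hCM hinv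
    linarith [hsum, hb, hθ, hm]
  -- θ-blow case
  · push_neg at hcase
    have hga : β ≤ g (a • ψ) := by
      by_contra hga'
      push_neg at hga'
      have hδc : ∃ δc > 0, ∀ x ∈ s, (a + δc) * |ψ x| ≤ ε := by
        rcases s.eq_empty_or_nonempty with hs | hs
        · exact ⟨1, one_pos, fun x hx => by rw [hs] at hx; exact absurd hx (by simp)⟩
        · obtain ⟨x₁, hx₁, hmin⟩ := Finset.exists_min_image s
            (fun x => (ε - a * |ψ x|) / (|ψ x| + 1)) hs
          have hpos1 : 0 < ε - a * |ψ x₁| := by linarith [hcase x₁ hx₁]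
          refine ⟨(ε - a * |ψ x₁|) / (|ψ x₁| + 1), by positivity, fun x hx => ?_⟩
          have h1 := hmin x hx
          have hpx : 0 < ε - a * |ψ x| := by linarith [hcase x hx]
          have habs : (0:ℝ) ≤ |ψ x| := abs_nonneg _
          have h2 : (ε - a * |ψ x|) / (|ψ x| + 1) * |ψ x| ≤ ε - a * |ψ x| := by
            rw [div_mul_eq_mul_div, div_le_iff₀ (by positivity)]
            nlinarith
          have h3 : (ε - a * |ψ x₁|) / (|ψ x₁| + 1) * |ψ x| ≤ ε - a * |ψ x| :=
            le_trans (mul_le_mul_of_nonneg_right h1 habs) h2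
          nlinarith
      obtain ⟨δc, hδc0, hδcb⟩ := hδc
      set Δ : ℝ := g ((a + 1) • ψ) - g (a • ψ) with hΔ
      set δg : ℝ := min 1 ((β - g (a • ψ)) / (|Δ| + 1)) with hδg
      have hδg0 : 0 < δg := by
        rw [hδg]; apply lt_min one_pos
        have : 0 < β - g (a • ψ) := by linarith
        positivity
      set δ : ℝ := min δc δg with hδ
      have hδ0 : 0 < δ := lt_min hδc0 hδg0
      have hδ1 : δ ≤ 1 := le_trans (min_le_right _ _) (min_le_left _ _)
      have hcombo : g ((a + δ) • ψ) ≤ (1 - δ) * g (a • ψ) + δ * g ((a + 1) • ψ) := by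
        have h := hconv.2 (Set.mem_univ (a • ψ)) (Set.mem_univ ((a + 1) • ψ))
          (by linarith : (0:ℝ) ≤ 1 - δ) hδ0.le (by ring)
        have he : (1 - δ) • (a • ψ) + δ • ((a + 1) • ψ) = (a + δ) • ψ := by
          rw [smul_smul, smul_smul, ← add_smul]; congr 1; ring
        rw [he] at h
        simpa [smul_eq_mul] using h
      have hgb : g ((a + δ) • ψ) < β := by
        have h1 : δ ≤ (β - g (a • ψ)) / (|Δ| + 1) := le_trans (min_le_right _ _) (min_le_right _ _)
        have h2 : (1 - δ) * g (a • ψ) + δ * g ((a + 1) • ψ) = g (a • ψ) + δ * Δ := by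
          rw [hΔ]; ring
        have h3 : δ * Δ ≤ δ * |Δ| := mul_le_mul_of_nonneg_left (le_abs_self Δ) hδ0.le
        have h4 : δ * |Δ| ≤ ((β - g (a • ψ)) / (|Δ| + 1)) * |Δ| :=
          mul_le_mul_of_nonneg_right h1 (abs_nonneg _)
        have h5 : ((β - g (a • ψ)) / (|Δ| + 1)) * |Δ| < β - g (a • ψ) := by
          rw [div_mul_eq_mul_div, div_lt_iff₀ (by positivity)]
          nlinarith [abs_nonneg Δ]
        linarith [hcombo]
      have hmem : (a + δ) ∈ AA g β ε s ψ := by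
        refine ⟨by linarith, hgb, fun x hx => ?_⟩
        rw [abs_mul, abs_of_nonneg (by linarith : (0:ℝ) ≤ a + δ)]
        calc (a + δ) * |ψ x| ≤ (a + δc) * |ψ x| :=
              mul_le_mul_of_nonneg_right (by linarith [min_le_left δc δg]) (abs_nonneg _)
          _ ≤ ε := hδcb x hx
      have := le_csSup hA hmem
      rw [← haa] at this
      linarith
    intro M
    set C' : ℝ := max (M + m) 1 with hC'
    have hC'0 : 0 < C' := lt_of_lt_of_le one_pos (le_max_right _ _)
    set δ' : ℝ := (C')⁻¹ with hδ'
    have hδ'0 : 0 < δ' := by positivity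
    let Ψ : WeakDual ℝ X := ψ
    have hy : (β - δ' : ℝ) < g (a • Ψ) := by
      have he : g (a • Ψ) = g (a • ψ) := rfl
      rw [he]; linarith
    have hev := hlsc (a • Ψ) (β - δ') hy
    have hcont : Continuous (fun t : ℝ => t • Ψ) := by
      apply WeakBilin.continuous_of_continuous_eval
      intro y
      have he : (fun t : ℝ => (topDualPairing ℝ X) (t • Ψ) y) = fun t : ℝ => t * ψ y := rfl
      rw [he]
      exact continuous_id.mul continuous_const
    have hev2 : ∀ᶠ t : ℝ in 𝓝 a, β - δ' < g (t • Ψ) :=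
      (hcont.tendsto a).eventually hev
    rw [Metric.eventually_nhds_iff] at hev2
    obtain ⟨rr, hrr0, hrr⟩ := hev2
    set η : ℝ := max (a - rr/2) (a/2) with hη
    have hη0 : 0 < η := lt_of_lt_of_le (by linarith) (le_max_right _ _)
    have hηa : η < a := by
      rw [hη]; apply max_lt (by linarith) (by linarith)
    have hηr : dist η a < rr := by
      rw [Real.dist_eq, abs_lt]
      constructor
      · have : a - rr/2 ≤ η := le_max_left _ _
        linarith
      · linarith
    have hgη : β - δ' < g (η • ψ) := hrr hηr
    have hD := DD_of_lt_sSup hconv hc hε hA hη0.le hηa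
    refine ⟨η, hη0, hηa, hD, ?_⟩
    have hθ := thetaR_blow (c := g 0) hδ'0 hgη hD.1
    have hsum : 0 ≤ ∑ x ∈ s, rhoR ε ((η • ψ) x) :=
      Finset.sum_nonneg fun x hx => rhoR_nonneg hε (hD.2 x hx)
    have hinv : (δ')⁻¹ = C' := by rw [hδ', inv_inv]
    have hCM : M + m ≤ C' := le_max_left _ _
    unfold hR
    rw [hinv] at hθ
    linarith [hm]

lemma AA_small (hconv : ConvexOn ℝ Set.univ g) (hc : g 0 < β) (hε : 0 < ε)
    {ψ : X →L[ℝ] ℝ} (hcoord : ∀ x ∈ s, |ψ x| ≤ ε) :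
    ∃ η₀ : ℝ, 0 < η₀ ∧ η₀ ∈ AA g β ε s ψ := by
  have hbc : 0 < β - g 0 := by linarith
  set η₀ : ℝ := min (1/2) ((β - g 0)/(2 * (|g ψ - g 0| + 1))) with hη₀
  have h0 : 0 < η₀ := lt_min (by norm_num) (by positivity)
  have h1 : η₀ ≤ 1 := le_trans (min_le_left _ _) (by norm_num)
  refine ⟨η₀, h0, h0.le, ?_, fun x hx => ?_⟩
  · have hcb := convex_combo hconv ψ h0.le h1
    have h2 : η₀ ≤ (β - g 0)/(2 * (|g ψ - g 0| + 1)) := min_le_right _ _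
    have h3 : η₀ * (g ψ - g 0) ≤ η₀ * |g ψ - g 0| :=
      mul_le_mul_of_nonneg_left (le_abs_self _) h0.le
    have h4 : η₀ * |g ψ - g 0| ≤ ((β - g 0)/(2 * (|g ψ - g 0| + 1))) * |g ψ - g 0| :=
      mul_le_mul_of_nonneg_right h2 (abs_nonneg _)
    have h5 : ((β - g 0)/(2 * (|g ψ - g 0| + 1))) * |g ψ - g 0| < β - g 0 := by
      rw [div_mul_eq_mul_div, div_lt_iff₀ (by positivity)]
      nlinarith [abs_nonneg (g ψ - g 0)]
    nlinarith [hcb]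
  · rw [abs_mul, abs_of_nonneg h0.le]
    calc η₀ * |ψ x| ≤ 1 * |ψ x| := mul_le_mul_of_nonneg_right h1 (abs_nonneg _)
      _ ≤ ε := by rw [one_mul]; exact hcoord x hx

lemma conj_top_of_not_DD (hconv : ConvexOn ℝ Set.univ g) (hc : g 0 < β) (hε : 0 < ε)
    (hsubD : ∀ ψ ∈ DD g β ε s, (subdiffStar g ψ).Nonempty)
    (hlsc : LowerSemicontinuous (fun φ : WeakDual ℝ X => g φ))
    {ψ : X →L[ℝ] ℝ} (hDDn : ψ ∉ DD g β ε s) :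
    conjugate (Phi g β ε s) ψ = ⊤ := by
  by_cases hUmem : ∀ x ∈ s, |ψ x| ≤ ε
  · have key : BddAbove (AA g β ε s ψ) ∧ 0 < sSup (AA g β ε s ψ) ∧
        sSup (AA g β ε s ψ) ≤ 1 := by
      by_cases hgβ : g ψ < β
      · -- some coordinate must equal ε
        have hx : ∃ x ∈ s, ε ≤ |ψ x| := by
          by_contra hx; push_neg at hx; exact hDDn ⟨hgβ, fun x hx' => hx x hx'⟩
        obtain ⟨x₀, hx₀, hx₀ε⟩ := hx
        have hxeq : |ψ x₀| = ε := le_antisymm (hUmem x₀ hx₀) hx₀ε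
        have hbd : ∀ η ∈ AA g β ε s ψ, η ≤ 1 := by
          intro η hη
          have h2 := hη.2.2 x₀ hx₀
          rw [abs_mul, abs_of_nonneg hη.1, hxeq] at h2
          nlinarith
        have h1A : (1:ℝ) ∈ AA g β ε s ψ :=
          ⟨zero_le_one, by simpa [one_smul] using hgβ,
            fun x hx => by rw [one_mul]; exact hUmem x hx⟩
        exact ⟨⟨1, hbd⟩, lt_of_lt_of_le one_pos (le_csSup ⟨1, hbd⟩ h1A),
          csSup_le ⟨1, h1A⟩ hbd⟩
      · push_neg at hgβ
        have hbd : ∀ η ∈ AA g β ε s ψ, η ≤ 1 := by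
          intro η hη
          by_contra hη1; push_neg at hη1
          have hηpos : (0:ℝ) < η := by linarith
          have hi0 : 0 < η⁻¹ := by positivity
          have hi1 : η⁻¹ < 1 := by
            rw [inv_lt_one_iff₀]; right; exact hη1
          have hcb := convex_combo hconv (η • ψ) hi0.le hi1.le
          have he : η⁻¹ • (η • ψ) = ψ := by
            rw [smul_smul, inv_mul_cancel₀ hηpos.ne', one_smul]
          rw [he] at hcb
          have hA' : η⁻¹ * g (η • ψ) < η⁻¹ * β :=
            mul_lt_mul_of_pos_left hη.2.1 hi0
          have hB' : (1 - η⁻¹) * g 0 ≤ (1 - η⁻¹) * β :=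
            mul_le_mul_of_nonneg_left hc.le (by linarith)
          nlinarith
        obtain ⟨η₀, hη₀0, hη₀A⟩ := AA_small hconv hc hε hUmem
        exact ⟨⟨1, hbd⟩, lt_of_lt_of_le hη₀0 (le_csSup ⟨1, hbd⟩ hη₀A),
          csSup_le ⟨η₀, hη₀A⟩ hbd⟩
    obtain ⟨hA, ha, hsup1⟩ := key
    apply conj_top_of_blow hconv hc hε hsubD
    intro M
    obtain ⟨η, hη0, hηa, hηD, hηM⟩ := blow hconv hc hε hlsc hA ha M
    exact ⟨η, hη0, le_trans hηa.le hsup1, hηD, hηM⟩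
  · push_neg at hUmem
    obtain ⟨x₀, hx₀, hgt⟩ := hUmem
    exact escape hconv hc hε hsubD hx₀ hgt

lemma nhd_basis {V : Set (WeakDual ℝ X)} (hV : V ∈ 𝓝 (0 : WeakDual ℝ X)) :
    ∃ (s : Finset X) (ε : ℝ), 0 < ε ∧
      ∀ ψ : X →L[ℝ] ℝ, (∀ x ∈ s, |ψ x| ≤ ε) → ψ ∈ V := by
  classical
  have hind : 𝓝 (0 : WeakDual ℝ X) =
      Filter.comap (fun (φ : WeakDual ℝ X) (y : X) => topDualPairing ℝ X φ y)
        (𝓝 (fun y : X => topDualPairing ℝ X (0 : WeakDual ℝ X) y)) :=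
    nhds_induced _ _
  rw [hind] at hV
  obtain ⟨W, hW, hWsub⟩ := Filter.mem_comap.mp hV
  have h0 : (fun y : X => topDualPairing ℝ X (0 : WeakDual ℝ X) y) = (fun _ : X => (0:ℝ)) := by
    ext y; rfl
  rw [h0, nhds_pi] at hW
  obtain ⟨I, hIfin, t, htn, hIsub⟩ := Filter.mem_pi.mp hW
  have hch : ∀ i : X, ∃ e : ℝ, 0 < e ∧ (i ∈ I → Metric.ball (0:ℝ) e ⊆ t i) := by
    intro i
    obtain ⟨e, he0, hball⟩ := Metric.mem_nhds_iff.mp (htn i)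
    exact ⟨e, he0, fun _ => hball⟩
  choose e he0 hball using hch
  set F := hIfin.toFinset with hF
  rcases F.eq_empty_or_nonempty with hFe | hFne
  · refine ⟨∅, 1, one_pos, fun ψ _ => ?_⟩
    apply hWsub
    apply hIsub
    intro i hi
    have : I = ∅ := by
      rwa [Set.Finite.toFinset_eq_empty] at hFe
    rw [this] at hi
    exact absurd hi (Set.notMem_empty i)
  · have hinf : 0 < F.inf' hFne e := by
      rw [Finset.lt_inf'_iff]
      exact fun i _ => he0 i
    refine ⟨F, (F.inf' hFne e)/2, by linarith, fun ψ hψ => ?_⟩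
    apply hWsub
    apply hIsub
    intro i hi
    have hiF : i ∈ F := hIfin.mem_toFinset.mpr hi
    have h1 : |ψ i| ≤ (F.inf' hFne e)/2 := hψ i hiF
    have h2 : F.inf' hFne e ≤ e i := Finset.inf'_le e hiF
    apply hball i hi
    rw [Metric.mem_ball, Real.dist_eq, sub_zero]
    show |ψ i| < e i
    linarith

end Main

end E36


variable {X : Type*} [AddCommGroup X] [Module ℝ X] [UniformSpace X] [IsUniformAddGroup X]
  [ContinuousSMul ℝ X] [LocallyConvexSpace ℝ X] [T2Space X] [CompleteSpace X]

set_option maxHeartbeats 2000000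

/-- Lemma 3.6: there is a weak*-neighborhood `U` of zero with `ℰ(U ∩ lev_g^<(α,β)) ≠ ∅`. -/
theorem exists_weakStarNhd_eclass_nonempty
    (g : (X →L[ℝ] ℝ) → ℝ)
    (hlsc : LowerSemicontinuous (fun φ : WeakDual ℝ X => g φ))
    (hconv : ConvexOn ℝ Set.univ g) (α β : ℝ)
    (h0 : α < g 0 ∧ g 0 < β)
    (hsub : ∀ φ : X →L[ℝ] ℝ, α < g φ → g φ < β → (subdiffStar g φ).Nonempty) :
    ∃ U : Set (X →L[ℝ] ℝ), U ∈ 𝓝 (0 : WeakDual ℝ X) ∧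
      (EClass (U ∩ {φ : X →L[ℝ] ℝ | α < g φ ∧ g φ < β})).Nonempty := by
  classical
  obtain ⟨hα, hβ⟩ := h0
  have hopen : IsOpen {φ : WeakDual ℝ X | α < g φ} :=
    lowerSemicontinuous_iff_isOpen_preimage.mp hlsc α
  have hV : {φ : WeakDual ℝ X | α < g φ} ∈ 𝓝 (0 : WeakDual ℝ X) :=
    hopen.mem_nhds hα
  obtain ⟨s, ε, hε, hUα⟩ := E36.nhd_basis hV
  set U : Set (X →L[ℝ] ℝ) := {ψ | ∀ x ∈ s, |ψ x| ≤ ε} with hUdef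
  set K : Set (X →L[ℝ] ℝ) := U ∩ {φ : X →L[ℝ] ℝ | α < g φ ∧ g φ < β} with hKdef
  have hsubD : ∀ ψ ∈ E36.DD g β ε s, (subdiffStar g ψ).Nonempty := by
    intro ψ hψ
    exact hsub ψ (hUα ψ fun x hx => (hψ.2 x hx).le) hψ.1
  have hDK : E36.DD g β ε s ⊆ K := fun ψ hψ =>
    ⟨fun x hx => (hψ.2 x hx).le, hUα ψ fun x hx => (hψ.2 x hx).le, hψ.1⟩
  have hKnotDD : ∀ ψ : X →L[ℝ] ℝ, ψ ∉ E36.DD g β ε s →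
      conjugate (E36.Phi g β ε s) ψ = ⊤ :=
    fun ψ hψ => E36.conj_top_of_not_DD hconv hβ hε hsubD hlsc hψ
  refine ⟨U, ?_, ⟨E36.Phi g β ε s, ?_, ?_, ?_, ?_, ?_, ?_⟩⟩
  · -- U is a weak* neighborhood of 0
    have hO : IsOpen {ψ : WeakDual ℝ X | ∀ x ∈ s, |ψ x| < ε} := by
      have he : {ψ : WeakDual ℝ X | ∀ x ∈ s, |ψ x| < ε}
          = ⋂ x ∈ s, {ψ : WeakDual ℝ X | |ψ x| < ε} := by
        ext ψ; simp
      rw [he]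
      apply isOpen_biInter_finset
      intro x hx
      have hc : Continuous fun ψ : WeakDual ℝ X => ψ x := WeakDual.eval_continuous x
      exact (isOpen_lt continuous_abs continuous_const).preimage hc
    have h0O : (0 : WeakDual ℝ X) ∈ {ψ : WeakDual ℝ X | ∀ x ∈ s, |ψ x| < ε} := by
      intro x hx
      simpa [show (0 : WeakDual ℝ X) x = 0 from rfl] using hε
    exact Filter.mem_of_superset (hO.mem_nhds h0O) fun ψ hψ x hx => (hψ x hx).le
  · -- never ⊥
    exact E36.conj_ne_bot hconv hβ hε hsubD
  · -- conjugate at 0 is 0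
    exact E36.conj_zero hconv hβ hε hsubD
  · -- asympCone K ⊆ dom
    intro ψ hψ
    obtain ⟨χ₀, hχ₀K, hray⟩ := hψ
    have hcoords : ∀ x ∈ s, ψ x = 0 := by
      intro x hx
      by_contra hne
      have hxp : 0 < |ψ x| := abs_pos.mpr hne
      have hl : ∀ l : ℝ, 0 ≤ l → |χ₀ x + l * ψ x| ≤ ε := by
        intro l hl0
        have hm := (hray l hl0).1 x hx
        simpa [ContinuousLinearMap.add_apply, ContinuousLinearMap.smul_apply,
          smul_eq_mul] using hm
      set l : ℝ := (ε + 1 + |χ₀ x|)/|ψ x| with hldef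
      have hl0 : 0 ≤ l := by positivity
      have habs := hl l hl0
      have h1 : |l * ψ x| = ε + 1 + |χ₀ x| := by
        rw [abs_mul, abs_of_nonneg hl0, hldef, div_mul_cancel₀ _ hxp.ne']
      have h2 : |l * ψ x| ≤ |χ₀ x + l * ψ x| + |χ₀ x| := by
        have h3 := abs_add_le (χ₀ x + l * ψ x) (-(χ₀ x))
        simpa using h3
      rw [h1] at h2
      linarith
    have hgψ : g ψ ≤ g 0 := by
      by_contra hgt
      push_neg at hgt
      set y : ℝ := (g 0 + g ψ)/2 with hy
      have hylt : y < g ψ := by rw [hy]; linarith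
      have hy0 : g 0 < y := by rw [hy]; linarith
      let Χ : WeakDual ℝ X := χ₀
      let Ψ : WeakDual ℝ X := ψ
      have hev := hlsc Ψ y hylt
      have hcont : Continuous fun t : ℝ => t • Χ + Ψ := by
        apply WeakBilin.continuous_of_continuous_eval
        intro z
        have he : (fun t : ℝ => (topDualPairing ℝ X) (t • Χ + Ψ) z)
            = fun t : ℝ => t * χ₀ z + ψ z := rfl
        rw [he]
        exact (continuous_id.mul continuous_const).add continuous_const
      have h00 : (0:ℝ) • Χ + Ψ = Ψ := by simp
      have hev2 : ∀ᶠ t : ℝ in 𝓝 0, y < g (t • Χ + Ψ) := by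
        have ht := hcont.tendsto 0
        rw [h00] at ht
        exact ht.eventually hev
      rw [Metric.eventually_nhds_iff] at hev2
      obtain ⟨rr, hrr0, hrr⟩ := hev2
      set t : ℝ := min (rr/2) (min (1/2) ((y - g 0)/(|β| + |g 0| + 1))) with htdef
      have ht0 : 0 < t := by
        apply lt_min (by linarith)
        apply lt_min (by norm_num)
        have : 0 < y - g 0 := by linarith
        positivity
      have ht1 : t ≤ 1/2 := le_trans (min_le_right _ _) (min_le_left _ _)
      have htr : dist t 0 < rr := by
        rw [Real.dist_eq, sub_zero, abs_of_pos ht0]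
        linarith [min_le_left (rr/2) (min (1/2) ((y - g 0)/(|β| + |g 0| + 1)))]
      have hgy : y < g (t • χ₀ + ψ) := hrr htr
      have hKmem := hray t⁻¹ (by positivity)
      have hgK : g (χ₀ + t⁻¹ • ψ) < β := hKmem.2.2
      have hcombo := E36.convex_combo hconv (χ₀ + t⁻¹ • ψ) ht0.le (by linarith)
      have hsm : t • (χ₀ + t⁻¹ • ψ) = t • χ₀ + ψ := by
        rw [smul_add, smul_smul, mul_inv_cancel₀ ht0.ne', one_smul]
      rw [hsm] at hcombo
      have ht2 : t ≤ (y - g 0)/(|β| + |g 0| + 1) :=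
        le_trans (min_le_right _ _) (min_le_right _ _)
      have hub : g (t • χ₀ + ψ) < y := by
        have hA1 : t * g (χ₀ + t⁻¹ • ψ) ≤ t * β := mul_le_mul_of_nonneg_left hgK.le ht0.le
        have hA2 : t * β + (1 - t) * g 0 = g 0 + t * (β - g 0) := by ring
        have hA3 : t * (β - g 0) ≤ t * (|β| + |g 0|) := by
          apply mul_le_mul_of_nonneg_left _ ht0.le
          have := le_abs_self β
          have := neg_abs_le (g 0)
          linarith
        have hA4 : t * (|β| + |g 0|) < y - g 0 := by
          have h5 : t * (|β| + |g 0|) ≤ ((y - g 0)/(|β| + |g 0| + 1)) * (|β| + |g 0|) :=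
            mul_le_mul_of_nonneg_right ht2 (by positivity)
          have h6 : ((y - g 0)/(|β| + |g 0| + 1)) * (|β| + |g 0|) < y - g 0 := by
            rw [div_mul_eq_mul_div, div_lt_iff₀ (by positivity)]
            nlinarith [abs_nonneg β, abs_nonneg (g 0)]
          linarith
        linarith [hcombo]
      linarith
    have hψD : ψ ∈ E36.DD g β ε s :=
      ⟨lt_of_le_of_lt hgψ hβ, fun x hx => by rw [hcoords x hx]; simpa using hε⟩
    obtain ⟨z, -, hconj, -⟩ := E36.main_point hconv hε hsubD hψD
    show conjugate (E36.Phi g β ε s) ψ ≠ ⊤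
    rw [hconj]
    exact EReal.coe_ne_top _
  · -- dom ⊆ K
    intro ψ hψ
    by_contra hψK
    have hψDD : ψ ∉ E36.DD g β ε s := fun h => hψK (hDK h)
    exact hψ (hKnotDD ψ hψDD)
  · -- the sSup condition
    intro ψ hψmem
    obtain ⟨hψK, hψnc⟩ := hψmem
    have h1A : (1:ℝ) ∈ E36.AA g β ε s ψ :=
      ⟨zero_le_one, by simpa [one_smul] using hψK.2.2,
        fun x hx => by rw [one_mul]; exact hψK.1 x hx⟩
    have hA : BddAbove (E36.AA g β ε s ψ) := by
      by_contra hnb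
      apply hψnc
      refine ⟨0, ⟨fun x hx => by simpa using hε.le, hα, hβ⟩, fun l hl => ?_⟩
      rw [zero_add]
      have hlA : l ∈ E36.AA g β ε s ψ := by
        rw [not_bddAbove_iff] at hnb
        obtain ⟨η', hη', hlt⟩ := hnb l
        exact E36.AA_dc hconv hβ hε hη' hl hlt.le
      have hcoord : ∀ x ∈ s, |(l • ψ) x| ≤ ε := by
        intro x hx
        have := hlA.2.2 x hx
        simpa [ContinuousLinearMap.smul_apply, smul_eq_mul] using this
      exact ⟨hcoord, hUα (l • ψ) hcoord, hlA.2.1⟩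
    have ha : 0 < sSup (E36.AA g β ε s ψ) :=
      lt_of_lt_of_le one_pos (le_csSup hA h1A)
    rw [sSup_eq_top]
    intro b hb
    obtain ⟨M, hbM, -⟩ := EReal.lt_iff_exists_real_btwn.mp hb
    obtain ⟨η, hη0, hηa, hηD, hηM⟩ := E36.blow hconv hβ hε hlsc hA ha (M + 1)
    obtain ⟨z, -, hconj, -⟩ := E36.main_point hconv hε hsubD hηD
    refine ⟨conjugate (E36.Phi g β ε s) (η • ψ),
      ⟨η, hη0, by rw [hconj]; exact EReal.coe_ne_top _, rfl⟩, ?_⟩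
    rw [hconj]
    calc b < (M : EReal) := hbM
      _ ≤ ((E36.hR g β ε s (η • ψ) : ℝ) : EReal) := by exact_mod_cast (by linarith : M ≤ E36.hR g β ε s (η • ψ))
  · -- attainment
    intro ψ hψ
    have hψD : ψ ∈ E36.DD g β ε s := by
      by_contra h
      exact hψ (hKnotDD ψ h)
    obtain ⟨z, -, -, hsd⟩ := E36.main_point hconv hε hsubD hψD
    exact ⟨z, hsd⟩


end
end

section
/- Let X be a Hausdorff locally convex space and K a nonempty circled convex subset of X. Then the directional asymptotic cone of the polar K° satisfies (K°)_∞ = {x* ∈ X* : σ_K(x*) ≤ 0} = {x* ∈ X* : σ_K(x*) = 0}. -/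
open Topology Set Pointwise Bornology

noncomputable section

variable {X : Type*} [AddCommGroup X] [Module ℝ X] [TopologicalSpace X]
  [IsTopologicalAddGroup X] [ContinuousSMul ℝ X] [LocallyConvexSpace ℝ X] [T2Space X]

theorem nonpos_of_forall_add_mul_le {a b c : ℝ} (h : ∀ l : ℝ, 0 ≤ l → a + l * b ≤ c) : b ≤ 0 := by
  by_contra! hb
  have hac : a ≤ c := by simpa using h 0 le_rfl
  have := h ((c - a + 1) / b) (div_nonneg (by linarith) hb.le)
  rw [div_mul_cancel₀ _ hb.ne'] at this
  linarith

section Polar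

variable {E : Type*} [AddCommGroup E] [Module ℝ E] [TopologicalSpace E]

theorem zero_mem_pol (K : Set E) : (0 : E →L[ℝ] ℝ) ∈ pol K := fun _ _ => zero_le_one

theorem asympCone_pol (K : Set E) : asympCone (pol K) = {φ | ∀ x ∈ K, φ x ≤ 0} := by
  ext φ
  constructor
  · rintro ⟨ψ, -, hψφ⟩ x hx
    exact nonpos_of_forall_add_mul_le fun l hl => hψφ l hl x hx
  · intro hφ
    refine ⟨0, zero_mem_pol K, fun l hl x hx => ?_⟩
    have : l * φ x ≤ 0 := mul_nonpos_of_nonneg_of_nonpos hl (hφ x hx)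
    simpa using this.trans zero_le_one

theorem supportFn_nonpos_iff (K : Set E) (φ : E →L[ℝ] ℝ) :
    supportFn K φ ≤ 0 ↔ ∀ x ∈ K, φ x ≤ 0 := by
  simp only [supportFn, sSup_le_iff, forall_mem_image, EReal.coe_nonpos]

theorem supportFn_nonneg {K : Set E} (h0 : (0 : E) ∈ K) (φ : E →L[ℝ] ℝ) : 0 ≤ supportFn K φ := by
  calc (0 : EReal) = ((φ 0 : ℝ) : EReal) := by simp
    _ ≤ supportFn K φ := le_sSup (mem_image_of_mem _ h0)

end Polar

theorem asympCone_polar_eq_nonpos_support_general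
    (K : Set X) (hne : K.Nonempty) (hbal : Balanced ℝ K) :
    asympCone (pol K) = {φ : X →L[ℝ] ℝ | supportFn K φ ≤ 0} ∧
    {φ : X →L[ℝ] ℝ | supportFn K φ ≤ 0} = {φ : X →L[ℝ] ℝ | supportFn K φ = 0} := by
  have h0 : (0 : X) ∈ K := hbal.zero_mem hne
  refine ⟨?_, ?_⟩
  · ext φ
    rw [asympCone_pol]
    exact (supportFn_nonpos_iff K φ).symm
  · ext φ
    exact ⟨fun h => le_antisymm h (supportFn_nonneg h0 φ), le_of_eq⟩

/-- The asymptotic cone of the polar `K°` is `{x* : σ_K(x*) ≤ 0} = {x* : σ_K(x*) = 0}`. -/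
theorem asympCone_polar_eq_nonpos_support
    (K : Set X) (hne : K.Nonempty) (hbal : Balanced ℝ K) (hconv : Convex ℝ K) :
    asympCone (pol K) = {φ : X →L[ℝ] ℝ | supportFn K φ ≤ 0} ∧
    {φ : X →L[ℝ] ℝ | supportFn K φ ≤ 0} = {φ : X →L[ℝ] ℝ | supportFn K φ = 0} :=
  asympCone_polar_eq_nonpos_support_general K hne hbal

end
end
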